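/- arXiv:2509.08079 — 8 statements merged into one kernel-verified Lean document; each statement's English description precedes it below -/
import Mathlib

section
/- Let ε: (0,∞) → (0,∞) satisfy ε(σ) = O(σ^{−3/2}) as σ → ∞. Then, as σ → ∞, sup_{|l| ≤ ε(σ)} |f_L(l) − f_L(0)| = O(1), where f_L (which depends on σ) is the density of the log-likelihood ratio defined in the context. -/
/-!
With `t = 1/σ`, `u = ψ_σ(l)/σ` and `g = log f₀`, the density is `f_L(l) = (σ/2) P_t(u) / S_t(u)`
where `P_t(u) = f₀(u - t) + f₀(u + t)` and `S_t(u) = (g'(u - t) - g'(u + t))/t`. Both are even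
in `u` with second derivatives bounded uniformly in `t`, and `S_t ≥ 2m > 0` near `0` because
`g''(0) = f₀''(0)/f₀(0) < 0`; hence `P_t(u)/S_t(u) - P_t(0)/S_t(0) = O(u²)`. On the other side
`σ l = σ φ_σ(σu)` is increasing in `u` (log-concavity) with slope at least `2m` near `0`, so
`|l| ≤ ε(σ)` forces `2m|u| ≤ σ ε(σ) = O(σ^{-1/2})`. Thus `σ u² = O(1)`.
-/

open Set Filter

theorem Function.Even.deriv {𝕜 E : Type*} [NontriviallyNormedField 𝕜] [NormedAddCommGroup E]
    [NormedSpace 𝕜 E] {f : 𝕜 → E} (hf : f.Even) : (deriv f).Odd := fun x => by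
  simpa [funext hf.eq] using deriv_comp_neg f (-x)

theorem ContDiff.hasDerivAt_iteratedDeriv {f : ℝ → ℝ} {n : ℕ} (hf : ContDiff ℝ n f) {k : ℕ}
    (hk : k < n) (x : ℝ) : HasDerivAt (iteratedDeriv k f) (iteratedDeriv (k + 1) f x) x := by
  rw [iteratedDeriv_succ]
  exact (hf.differentiable_iteratedDeriv k (mod_cast hk) x).hasDerivAt

theorem abs_sub_le_of_abs_deriv_le {F F' : ℝ → ℝ} {s : Set ℝ} (hs : Convex ℝ s)
    (hF : ∀ x, HasDerivAt F (F' x) x) {C : ℝ} (hC : ∀ x ∈ s, |F' x| ≤ C) {x y : ℝ}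
    (hx : x ∈ s) (hy : y ∈ s) : |F y - F x| ≤ C * |y - x| :=
  hs.norm_image_sub_le_of_norm_hasDerivWithin_le (fun z _ => (hF z).hasDerivWithinAt) hC hx hy

theorem Function.Even.abs_sub_le_mul_sq {F F' F'' : ℝ → ℝ} (hF : F.Even)
    (hF' : ∀ x, HasDerivAt F (F' x) x) (hF'' : ∀ x, HasDerivAt F' (F'' x) x) {K r u : ℝ}
    (hK : ∀ x ∈ Icc (-r) r, |F'' x| ≤ K) (hu : |u| ≤ r) : |F u - F 0| ≤ K * u ^ 2 := by
  have hr : 0 ≤ r := (abs_nonneg u).trans hu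
  have hK0 : 0 ≤ K := (abs_nonneg _).trans (hK 0 ⟨by linarith, hr⟩)
  have h0 : F' 0 = 0 := by rw [← (hF' 0).deriv]; exact hF.deriv.map_zero
  have hslope : ∀ x ∈ uIcc 0 u, |F' x| ≤ K * |u| := fun x hx => by
    have hxu : |x| ≤ |u| := by simpa using abs_sub_left_of_mem_uIcc hx
    have hxr : x ∈ Icc (-r) r := abs_le.mp (hxu.trans hu)
    calc |F' x| = |F' x - F' 0| := by rw [h0, sub_zero]
      _ ≤ K * |x - 0| := abs_sub_le_of_abs_deriv_le (convex_Icc _ _) hF'' hK ⟨by linarith, hr⟩ hxr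
      _ ≤ K * |u| := by rw [sub_zero]; gcongr
  calc |F u - F 0| ≤ K * |u| * |u - 0| :=
        abs_sub_le_of_abs_deriv_le (convex_uIcc 0 u) hF' hslope left_mem_uIcc right_mem_uIcc
    _ = K * u ^ 2 := by rw [sub_zero, mul_assoc, abs_mul_abs_self, sq]

theorem abs_div_sub_div_le {a b a' b' μ : ℝ} (hμ : 0 < μ) (hb : μ ≤ b) (hb' : μ ≤ b') :
    |a / b - a' / b'| ≤ |a - a'| / μ + |a'| * |b - b'| / μ ^ 2 := by
  have hb0 : 0 < b := hμ.trans_le hb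
  have hb0' : 0 < b' := hμ.trans_le hb'
  have hsplit : a / b - a' / b' = (a - a') / b + a' * (b' - b) / (b * b') := by
    field_simp; ring
  rw [hsplit]
  refine (abs_add_le _ _).trans (add_le_add ?_ ?_)
  · rw [abs_div, abs_of_pos hb0]; gcongr
  · rw [abs_div, abs_mul, abs_sub_comm, abs_of_pos (mul_pos hb0 hb0'), sq]; gcongr

theorem mul_min_abs_le_abs {q q' : ℝ → ℝ} (hq : ∀ x, HasDerivAt q (q' x) x) (hmono : Monotone q)
    (h0 : q 0 = 0) {c a : ℝ} (ha : 0 ≤ a) (hc : ∀ x ∈ Icc (-a) a, c ≤ q' x) (u : ℝ) :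
    c * min |u| a ≤ |q u| := by
  have hgrowth := (convex_Icc (-a) a).mul_sub_le_image_sub_of_le_deriv
    (fun x _ => (hq x).continuousAt.continuousWithinAt)
    (fun x _ => (hq x).differentiableAt.differentiableWithinAt)
    (fun x hx => (hq x).deriv ▸ hc x (interior_subset hx))
  have h0mem : (0 : ℝ) ∈ Icc (-a) a := ⟨by linarith, ha⟩
  rcases le_total 0 u with hu | hu
  · have h := hgrowth 0 h0mem (min u a) ⟨by linarith [le_min hu ha], min_le_right _ _⟩
      (le_min hu ha)
    rw [abs_of_nonneg hu, abs_of_nonneg (h0 ▸ hmono hu)]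
    linarith [hmono (min_le_left u a)]
  · have h := hgrowth (max u (-a)) ⟨le_max_right _ _, by linarith [max_le hu (neg_nonpos.2 ha)]⟩
      0 h0mem (max_le hu (neg_nonpos.2 ha))
    have hmin : min |u| a = -max u (-a) := by
      rw [abs_of_nonpos hu, ← min_neg_neg, neg_neg]
    rw [hmin, abs_of_nonpos (h0 ▸ hmono hu)]
    linarith [hmono (le_max_left u (-a))]

noncomputable section

def centralSum (F : ℝ → ℝ) (t v : ℝ) : ℝ := F (v - t) + F (v + t)

def centralDrop (F : ℝ → ℝ) (t v : ℝ) : ℝ := (F (v - t) - F (v + t)) / t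

end

section Central

variable {F F' : ℝ → ℝ} {t v : ℝ}

theorem hasDerivAt_centralSum (hF : ∀ x, HasDerivAt F (F' x) x) (t v : ℝ) :
    HasDerivAt (centralSum F t) (centralSum F' t v) v :=
  ((hF _).comp_sub_const v t).add ((hF _).comp_add_const v t)

theorem hasDerivAt_centralDrop (hF : ∀ x, HasDerivAt F (F' x) x) (t v : ℝ) :
    HasDerivAt (centralDrop F t) (centralDrop F' t v) v :=
  (((hF _).comp_sub_const v t).sub ((hF _).comp_add_const v t)).div_const t

theorem Function.Even.centralSum (hF : F.Even) (t : ℝ) : (centralSum F t).Even := fun v => by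
  rw [_root_.centralSum, _root_.centralSum, show -v - t = -(v + t) by ring,
    show -v + t = -(v - t) by ring, hF.eq, hF.eq, add_comm]

theorem Function.Odd.centralDrop (hF : F.Odd) (t : ℝ) : (centralDrop F t).Even := fun v => by
  rw [_root_.centralDrop, _root_.centralDrop, show -v - t = -(v + t) by ring,
    show -v + t = -(v - t) by ring, hF.eq, hF.eq, neg_sub_neg]

theorem Function.Even.centralDrop_zero (hF : F.Even) (t : ℝ) : centralDrop F t 0 = 0 := by
  rw [centralDrop, zero_sub, zero_add, hF.eq, sub_self, zero_div]

theorem two_mul_le_centralDrop (hF : ∀ x, HasDerivAt F (F' x) x) {m : ℝ} (ht : 0 < t)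
    (hm : ∀ x ∈ Icc (v - t) (v + t), F' x ≤ -m) : 2 * m ≤ centralDrop F t v := by
  have h := (convex_Icc (v - t) (v + t)).image_sub_le_mul_sub_of_deriv_le
    (fun x _ => (hF x).continuousAt.continuousWithinAt)
    (fun x _ => (hF x).differentiableAt.differentiableWithinAt)
    (fun x hx => (hF x).deriv ▸ hm x (interior_subset hx))
    (v - t) (left_mem_Icc.2 (by linarith)) (v + t) (right_mem_Icc.2 (by linarith)) (by linarith)
  rw [centralDrop, le_div_iff₀ ht]
  linarith

theorem abs_centralDrop_le (hF : ∀ x, HasDerivAt F (F' x) x) {K : ℝ} (ht : 0 < t)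
    (hK : ∀ x ∈ Icc (v - t) (v + t), |F' x| ≤ K) : |centralDrop F t v| ≤ 2 * K := by
  have h := abs_sub_le_of_abs_deriv_le (convex_Icc _ _) hF hK
    (left_mem_Icc.2 (by linarith : v - t ≤ v + t)) (right_mem_Icc.2 (by linarith : v - t ≤ v + t))
  rw [centralDrop, abs_div, abs_of_pos ht, div_le_iff₀ ht, abs_sub_comm]
  calc |F (v + t) - F (v - t)| ≤ K * |v + t - (v - t)| := h
    _ = 2 * K * t := by rw [show v + t - (v - t) = 2 * t by ring, abs_of_pos (by linarith)]; ring

end Central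

theorem exists_eventually_mul_sq_le_of_isBigO {ε : ℝ → ℝ}
    (h : ε =O[atTop] fun σ => σ ^ (-(3 / 2) : ℝ)) :
    ∃ A, ∀ᶠ σ in atTop, σ * (σ * ε σ) ^ 2 ≤ A := by
  obtain ⟨c, hc⟩ := h.bound
  refine ⟨c ^ 2, ?_⟩
  filter_upwards [hc, eventually_gt_atTop 0] with σ hε hσ
  have hpow : 0 < σ ^ (3 / 2 : ℝ) := by positivity
  rw [Real.norm_eq_abs, Real.norm_of_nonneg (by positivity), Real.rpow_neg hσ.le] at hε
  have hscaled : |σ ^ (3 / 2 : ℝ) * ε σ| ≤ c := by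
    rw [abs_mul, abs_of_pos hpow, ← le_div_iff₀' hpow]
    simpa [div_eq_mul_inv] using hε
  have hcube : (σ ^ (3 / 2 : ℝ)) ^ 2 = σ ^ 3 := by
    rw [← Real.rpow_natCast, ← Real.rpow_mul hσ.le]; norm_num
  calc σ * (σ * ε σ) ^ 2 = |σ ^ (3 / 2 : ℝ) * ε σ| ^ 2 := by
        rw [sq_abs, mul_pow (σ ^ (3 / 2 : ℝ)), hcube]; ring
    _ ≤ c ^ 2 := pow_le_pow_left₀ (abs_nonneg _) hscaled 2

theorem exists_iteratedDeriv_two_log_le_neg {f : ℝ → ℝ} (hpos : ∀ x, 0 < f x) (hf : f.Even)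
    (hf2 : ContDiff ℝ 2 f) (h20 : iteratedDeriv 2 f 0 < 0) :
    ∃ δ > 0, ∃ m > 0, ∀ x ∈ Icc (-δ) δ, iteratedDeriv 2 (fun x => Real.log (f x)) x ≤ -m := by
  set g : ℝ → ℝ := fun x => Real.log (f x)
  have hdiff : Differentiable ℝ f := hf2.differentiable (by norm_num)
  have hg' : deriv g = deriv f / f :=
    funext fun x => ((hdiff x).hasDerivAt.log (hpos x).ne').deriv
  have hat0 : iteratedDeriv 2 g 0 = iteratedDeriv 2 f 0 / f 0 := by
    rw [iteratedDeriv_succ, iteratedDeriv_one, hg', ((hf2.differentiable_deriv_two 0).hasDerivAt.div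
      (hdiff 0).hasDerivAt (hpos 0).ne').deriv, hf.deriv.map_zero, iteratedDeriv_succ,
      iteratedDeriv_one, mul_zero, sub_zero, sq, mul_div_mul_right _ _ (hpos 0).ne']
  have hneg : iteratedDeriv 2 g 0 < iteratedDeriv 2 g 0 / 2 := by
    linarith [hat0 ▸ div_neg_of_neg_of_pos h20 (hpos 0)]
  have hcont : Continuous (iteratedDeriv 2 g) :=
    (hf2.log fun x => (hpos x).ne').continuous_iteratedDeriv 2 le_rfl
  obtain ⟨δ, hδ, hball⟩ := Metric.nhds_basis_closedBall.eventually_iff.mp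
    (hcont.continuousAt.eventually (gt_mem_nhds hneg))
  refine ⟨δ, hδ, -(iteratedDeriv 2 g 0 / 2), by linarith, fun x hx => ?_⟩
  rw [neg_neg]
  exact (hball (by rwa [Real.closedBall_eq_Icc, zero_sub, zero_add])).le

theorem exists_abs_centralSum_div_centralDrop_sub_le {f g : ℝ → ℝ} (hf : ContDiff ℝ 2 f)
    (hfe : f.Even) (hg : ContDiff ℝ 4 g) (hge : g.Even) {δ m : ℝ} (hm : 0 < m)
    (hg2 : ∀ x ∈ Icc (-δ) δ, iteratedDeriv 2 g x ≤ -m) :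
    ∃ C, ∀ t > 0, ∀ u, |u| + t ≤ δ →
      |centralSum f t u / centralDrop (deriv g) t u -
        centralSum f t 0 / centralDrop (deriv g) t 0| ≤ C * u ^ 2 := by
  obtain ⟨M₀, hM₀⟩ := isCompact_Icc.exists_bound_of_continuousOn (hf.continuous.continuousOn
    (s := Icc (-δ) δ))
  obtain ⟨M₂, hM₂⟩ := isCompact_Icc.exists_bound_of_continuousOn
    ((hf.continuous_iteratedDeriv 2 le_rfl).continuousOn (s := Icc (-δ) δ))
  obtain ⟨M₄, hM₄⟩ := isCompact_Icc.exists_bound_of_continuousOn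
    ((hg.continuous_iteratedDeriv 4 le_rfl).continuousOn (s := Icc (-δ) δ))
  simp only [Real.norm_eq_abs] at hM₀ hM₂ hM₄
  have hf' : ∀ x, HasDerivAt f (iteratedDeriv 1 f x) x :=
    iteratedDeriv_zero (f := f) ▸ hf.hasDerivAt_iteratedDeriv (by norm_num)
  have hf'' : ∀ x, HasDerivAt (iteratedDeriv 1 f) (iteratedDeriv 2 f x) x :=
    hf.hasDerivAt_iteratedDeriv (by norm_num)
  have hg' : ∀ x, HasDerivAt (deriv g) (iteratedDeriv 2 g x) x :=
    iteratedDeriv_one (f := g) ▸ hg.hasDerivAt_iteratedDeriv (by norm_num)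
  have hg'' : ∀ x, HasDerivAt (iteratedDeriv 2 g) (iteratedDeriv 3 g x) x :=
    hg.hasDerivAt_iteratedDeriv (by norm_num)
  have hg''' : ∀ x, HasDerivAt (iteratedDeriv 3 g) (iteratedDeriv 4 g x) x :=
    hg.hasDerivAt_iteratedDeriv (by norm_num)
  refine ⟨M₂ / m + M₀ * M₄ / m ^ 2, fun t ht u hu => ?_⟩
  have hmem : ∀ v ∈ Icc (-|u|) |u|, ∀ x ∈ Icc (v - t) (v + t), x ∈ Icc (-δ) δ :=
    fun v hv x hx => ⟨by linarith [hv.1, hx.1], by linarith [hv.2, hx.2]⟩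
  have h0 : (0 : ℝ) ∈ Icc (-|u|) |u| := ⟨by linarith [abs_nonneg u], abs_nonneg u⟩
  have hS : ∀ v ∈ Icc (-|u|) |u|, 2 * m ≤ centralDrop (deriv g) t v := fun v hv =>
    two_mul_le_centralDrop hg' ht fun x hx => hg2 x (hmem v hv x hx)
  have hP : |centralSum f t u - centralSum f t 0| ≤ 2 * M₂ * u ^ 2 :=
    (hfe.centralSum t).abs_sub_le_mul_sq (hasDerivAt_centralSum hf' t)
      (hasDerivAt_centralSum hf'' t) (fun v hv => (abs_add_le _ _).trans (by
        linarith [hM₂ _ (hmem v hv _ (left_mem_Icc.2 (by linarith))),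
          hM₂ _ (hmem v hv _ (right_mem_Icc.2 (by linarith)))])) le_rfl
  have hS' : |centralDrop (deriv g) t u - centralDrop (deriv g) t 0| ≤ 2 * M₄ * u ^ 2 :=
    (hge.deriv.centralDrop t).abs_sub_le_mul_sq (hasDerivAt_centralDrop hg' t)
      (hasDerivAt_centralDrop hg'' t)
      (fun v hv => abs_centralDrop_le hg''' ht fun x hx => hM₄ x (hmem v hv x hx)) le_rfl
  have hP0 : |centralSum f t 0| ≤ 2 * M₀ := (abs_add_le _ _).trans (by
    linarith [hM₀ _ (hmem 0 h0 _ (left_mem_Icc.2 (by linarith))),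
      hM₀ _ (hmem 0 h0 _ (right_mem_Icc.2 (by linarith)))])
  have hM₀0 : 0 ≤ M₀ := by linarith [abs_nonneg (centralSum f t 0)]
  calc _ ≤ |centralSum f t u - centralSum f t 0| / (2 * m) + |centralSum f t 0| *
        |centralDrop (deriv g) t u - centralDrop (deriv g) t 0| / (2 * m) ^ 2 :=
        abs_div_sub_div_le (by positivity) (hS u ⟨neg_abs_le u, le_abs_self u⟩) (hS 0 h0)
    _ ≤ 2 * M₂ * u ^ 2 / (2 * m) + 2 * M₀ * (2 * M₄ * u ^ 2) / (2 * m) ^ 2 := by gcongr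
    _ = (M₂ / m + M₀ * M₄ / m ^ 2) * u ^ 2 := by field_simp

theorem two_mul_abs_le_of_abs_centralDrop_le {g : ℝ → ℝ} (hg : ContDiff ℝ 2 g)
    (hconc : ConcaveOn ℝ univ g) (hge : g.Even) {δ m : ℝ} (hm : 0 ≤ m)
    (hg2 : ∀ x ∈ Icc (-δ) δ, iteratedDeriv 2 g x ≤ -m) {t u η : ℝ} (ht : 0 < t)
    (htδ : 2 * t ≤ δ) (hη : η < m * δ) (hu : |centralDrop g t u| ≤ η) : 2 * m * |u| ≤ η := by
  have hg' : ∀ x, HasDerivAt g (deriv g x) x :=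
    fun x => (hg.differentiable (by norm_num) x).hasDerivAt
  have hg'' : ∀ x, HasDerivAt (deriv g) (iteratedDeriv 2 g x) x :=
    iteratedDeriv_one (f := g) ▸ hg.hasDerivAt_iteratedDeriv (by norm_num)
  have hanti : Antitone (deriv g) :=
    antitoneOn_univ.mp (hconc.antitoneOn_deriv fun x _ => (hg' x).differentiableAt)
  have hmono : Monotone (centralDrop g t) := monotone_of_hasDerivAt_nonneg
    (hasDerivAt_centralDrop hg' t) fun v => div_nonneg (sub_nonneg.2 (hanti (by linarith))) ht.le
  have hgrowth := mul_min_abs_le_abs (hasDerivAt_centralDrop hg' t) hmono (hge.centralDrop_zero t)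
    (c := 2 * m) (a := δ - t) (by linarith) (fun v hv => two_mul_le_centralDrop hg'' ht fun x hx =>
      hg2 x ⟨by linarith [hv.1, hx.1], by linarith [hv.2, hx.2]⟩) u
  rcases min_cases |u| (δ - t) with ⟨hmin, -⟩ | ⟨hmin, -⟩ <;> rw [hmin] at hgrowth
  · linarith
  · nlinarith

theorem sub_comp_div_eq_centralDrop (g : ℝ → ℝ) {σ : ℝ} (hσ : σ ≠ 0) (y : ℝ) :
    g ((y - 1) / σ) - g ((y + 1) / σ) = σ⁻¹ * centralDrop g σ⁻¹ (y / σ) := by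
  rw [centralDrop, sub_div, add_div, one_div, mul_div_cancel₀ _ (inv_ne_zero hσ)]

theorem llr_density_eq {f g φ ψ fY fL : ℝ → ℝ} (hg : Differentiable ℝ g) {σ : ℝ} (hσ : σ ≠ 0)
    (hφ : ∀ y, φ y = g ((y - 1) / σ) - g ((y + 1) / σ))
    (hfY : ∀ y, fY y = ((1 / σ) * f ((y - 1) / σ) + (1 / σ) * f ((y + 1) / σ)) / 2)
    (hfL : ∀ l, fL l = fY (ψ l) / deriv φ (ψ l)) (l : ℝ) :
    fL l = σ / 2 * (centralSum f σ⁻¹ (ψ l / σ) / centralDrop (deriv g) σ⁻¹ (ψ l / σ)) := by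
  set y := ψ l
  have hd : HasDerivAt φ (σ⁻¹ * (centralDrop (deriv g) σ⁻¹ (y / σ) * (1 / σ))) y := by
    rw [funext hφ, funext (sub_comp_div_eq_centralDrop g hσ)]
    exact ((hasDerivAt_centralDrop (fun x => (hg x).hasDerivAt) σ⁻¹ (y / σ)).comp y
      ((hasDerivAt_id' y).div_const σ)).const_mul σ⁻¹
  rw [hfL, hfY, hd.deriv, centralSum, sub_div y 1 σ, add_div y 1 σ, one_div, ← mul_add]
  rcases eq_or_ne (centralDrop (deriv g) σ⁻¹ (y / σ)) 0 with h0 | h0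
  · simp [h0]
  · field_simp

theorem eventually_abs_add_inv_le_and_mul_sq_le {g : ℝ → ℝ} (hg : ContDiff ℝ 2 g)
    (hconc : ConcaveOn ℝ univ g) (hge : g.Even) {δ m A : ℝ} (hδ : 0 < δ) (hm : 0 < m)
    (hg2 : ∀ x ∈ Icc (-δ) δ, iteratedDeriv 2 g x ≤ -m) {ε : ℝ → ℝ}
    (hA : ∀ᶠ σ in atTop, σ * (σ * ε σ) ^ 2 ≤ A) :
    ∀ᶠ σ in atTop, ∀ u, |σ⁻¹ * centralDrop g σ⁻¹ u| ≤ ε σ →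
      |u| + σ⁻¹ ≤ δ ∧ σ * u ^ 2 ≤ A / (4 * m ^ 2) := by
  filter_upwards [hA, eventually_gt_atTop (max (2 / δ) (A / (m * δ) ^ 2))] with σ hσA hσ u hu
  rw [max_lt_iff, div_lt_iff₀ hδ, div_lt_iff₀ (by positivity)] at hσ
  have hσ0 : 0 < σ := by nlinarith
  rw [abs_mul, abs_of_pos (inv_pos.2 hσ0), inv_mul_le_iff₀ hσ0] at hu
  have hη : σ * ε σ < m * δ :=
    lt_of_abs_lt (abs_lt_of_sq_lt_sq (by nlinarith) (by positivity))
  have hloc : 2 * m * |u| ≤ σ * ε σ :=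
    two_mul_abs_le_of_abs_centralDrop_le hg hconc hge hm.le hg2 (inv_pos.2 hσ0)
      (by rw [← div_eq_mul_inv, div_le_iff₀ hσ0]; linarith) hη hu
  refine ⟨?_, ?_⟩
  · have : σ⁻¹ < δ / 2 := by rw [inv_lt_iff_one_lt_mul₀ hσ0]; linarith
    nlinarith
  · rw [le_div_iff₀ (by positivity)]
    calc σ * u ^ 2 * (4 * m ^ 2) = σ * (2 * m * |u|) ^ 2 := by rw [mul_pow _ |u|, sq_abs]; ring
      _ ≤ σ * (σ * ε σ) ^ 2 := by gcongr
      _ ≤ A := hσA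

theorem fL_flat_near_zero_bigO_general
    (f₀ : ℝ → ℝ)
    (hpos : ∀ x, 0 < f₀ x)
    (heven : ∀ x, f₀ (-x) = f₀ x)
    (hlogconc : StrictConcaveOn ℝ Set.univ (fun x => Real.log (f₀ x)))
    (hC4 : ContDiff ℝ 4 f₀)
    (h20 : iteratedDeriv 2 f₀ 0 < 0)
    (φ ψ : ℝ → ℝ → ℝ)
    (hφ : ∀ σ > (0:ℝ), ∀ y : ℝ,
      φ σ y = Real.log (f₀ ((y - 1) / σ)) - Real.log (f₀ ((y + 1) / σ)))
    (hψl : ∀ σ > (0:ℝ), Function.LeftInverse (ψ σ) (φ σ))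
    (hψr : ∀ σ > (0:ℝ), Function.RightInverse (ψ σ) (φ σ))
    (fY : ℝ → ℝ → ℝ)
    (hfY : ∀ σ > (0:ℝ), ∀ y : ℝ,
      fY σ y = ((1 / σ) * f₀ ((y - 1) / σ) + (1 / σ) * f₀ ((y + 1) / σ)) / 2)
    (fL : ℝ → ℝ → ℝ)
    (hfL : ∀ σ > (0:ℝ), ∀ l : ℝ,
      fL σ l = fY σ (ψ σ l) / deriv (φ σ) (ψ σ l))
    (ε : ℝ → ℝ)
    (hεO : ε =O[Filter.atTop] (fun σ : ℝ => σ ^ (-(3/2) : ℝ))) :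
    ∃ C : ℝ, ∃ σ₀ : ℝ, ∀ σ ≥ σ₀, ∀ l : ℝ, |l| ≤ ε σ →
      |fL σ l - fL σ 0| ≤ C := by
  set g : ℝ → ℝ := fun x => Real.log (f₀ x)
  have hg : ContDiff ℝ 4 g := hC4.log fun x => (hpos x).ne'
  have hge : g.Even := fun x => by simp only [g, heven x]
  obtain ⟨δ, hδ, m, hm, hg2⟩ :=
    exists_iteratedDeriv_two_log_le_neg hpos heven (hC4.of_le (by norm_num)) h20
  obtain ⟨C, hC⟩ :=
    exists_abs_centralSum_div_centralDrop_sub_le (hC4.of_le (by norm_num)) heven hg hge hm hg2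
  obtain ⟨A, hA⟩ := exists_eventually_mul_sq_le_of_isBigO hεO
  obtain ⟨σ₀, hσ₀⟩ := eventually_atTop.mp <|
    (eventually_abs_add_inv_le_and_mul_sq_le (hg.of_le (by norm_num)) hlogconc.concaveOn hge hδ
      hm hg2 hA).and (eventually_gt_atTop 0)
  refine ⟨max C 0 * (A / (4 * m ^ 2)) / 2, σ₀, fun σ hσ l hl => ?_⟩
  obtain ⟨hloc, hσ0⟩ := hσ₀ σ hσ
  have hfL' := llr_density_eq (g := g) (hg.differentiable (by norm_num)) hσ0.ne' (hφ σ hσ0)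
    (hfY σ hσ0) (hfL σ hσ0)
  have hψ0 : ψ σ 0 = 0 := by simpa [hφ σ hσ0, neg_div, heven] using hψl σ hσ0 0
  obtain ⟨hu, hu2⟩ := hloc (ψ σ l / σ) <| by
    rwa [← hψr σ hσ0 l, hφ σ hσ0, sub_comp_div_eq_centralDrop g hσ0.ne'] at hl
  rw [hfL', hfL', hψ0, zero_div, ← mul_sub, abs_mul, abs_of_pos (by positivity)]
  calc σ / 2 * |_| ≤ σ / 2 * (max C 0 * (ψ σ l / σ) ^ 2) := by
        gcongr; exact (hC _ (inv_pos.2 hσ0) _ hu).trans (by gcongr; exact le_max_left _ _)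
    _ = max C 0 * (σ * (ψ σ l / σ) ^ 2) / 2 := by ring
    _ ≤ max C 0 * (A / (4 * m ^ 2)) / 2 := by gcongr

/-- If `ε(σ) = O(σ^{−3/2})` as `σ → ∞`, then
`sup_{|l| ≤ ε(σ)} |f_L(l) − f_L(0)| = O(1)` as `σ → ∞`, where `f_L` is the density of
the log-likelihood ratio for a binary-input additive-noise channel whose noise has
density `f_N(x) = (1/σ) f₀(x/σ)` with `f₀` an even, strictly log-concave, `C⁴`
probability density satisfying `f₀(0) > 0` and `f₀''(0) < 0`. -/
theorem fL_flat_near_zero_bigO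
    (f₀ : ℝ → ℝ)
    (hpos : ∀ x, 0 < f₀ x)
    (heven : ∀ x, f₀ (-x) = f₀ x)
    (hlogconc : StrictConcaveOn ℝ Set.univ (fun x => Real.log (f₀ x)))
    (hC4 : ContDiff ℝ 4 f₀)
    (hdens : ∫ x : ℝ, f₀ x = 1)
    (h00 : 0 < f₀ 0)
    (h20 : iteratedDeriv 2 f₀ 0 < 0)
    (φ ψ : ℝ → ℝ → ℝ)
    (hφ : ∀ σ > (0:ℝ), ∀ y : ℝ,
      φ σ y = Real.log (f₀ ((y - 1) / σ)) - Real.log (f₀ ((y + 1) / σ)))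
    (hψl : ∀ σ > (0:ℝ), Function.LeftInverse (ψ σ) (φ σ))
    (hψr : ∀ σ > (0:ℝ), Function.RightInverse (ψ σ) (φ σ))
    (fY : ℝ → ℝ → ℝ)
    (hfY : ∀ σ > (0:ℝ), ∀ y : ℝ,
      fY σ y = ((1 / σ) * f₀ ((y - 1) / σ) + (1 / σ) * f₀ ((y + 1) / σ)) / 2)
    (fL : ℝ → ℝ → ℝ)
    (hfL : ∀ σ > (0:ℝ), ∀ l : ℝ,
      fL σ l = fY σ (ψ σ l) / deriv (φ σ) (ψ σ l))
    (ε : ℝ → ℝ)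
    (hεpos : ∀ σ > (0:ℝ), 0 < ε σ)
    (hεO : ε =O[Filter.atTop] (fun σ : ℝ => σ ^ (-(3/2) : ℝ))) :
    ∃ C : ℝ, ∃ σ₀ : ℝ, ∀ σ ≥ σ₀, ∀ l : ℝ, |l| ≤ ε σ →
      |fL σ l - fL σ 0| ≤ C :=
  fL_flat_near_zero_bigO_general f₀ hpos heven hlogconc hC4 h20 φ ψ hφ hψl hψr fY hfY fL hfL ε hεO
end

section
/- As σ → ∞, the second derivative of f_L at 0 satisfies f_L''(0) = O(σ³), where f_L (which depends on σ) is the density of the log-likelihood ratio defined in the context. -/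
/-!
Write `g = log f₀` and `t = 1/σ`. Differentiating `f_L = (f_Y / φ') ∘ φ⁻¹` twice at `0 = φ 0`
gives `f_L''(0) = (f_Y'' φ' - f_Y φ''') / φ'⁴` at `y = 0`, all other terms vanishing because `f_Y`
is even and `φ` is odd. Evaluating these derivatives of the shifted densities at `0` yields
`f_L''(0) = (f₀ g''' - f₀'' g')(t) / (8 g'(t)⁴)`. Since `g` is even, `g'(t) ~ g''(0) t` and
`g'''(t) = O(t)` as `t → 0`, with `g''(0) = f₀''(0) / f₀(0) ≠ 0`; hence `f_L''(0) = O(t⁻³) = O(σ³)`.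
-/

open Filter Asymptotics Topology Function

theorem ContDiff.hasDerivAt_iteratedDeriv_s1 {𝕜 F : Type*} [NontriviallyNormedField 𝕜]
    [NormedAddCommGroup F] [NormedSpace 𝕜 F] {f : 𝕜 → F} {m : WithTop ℕ∞} (hf : ContDiff 𝕜 m f)
    {n : ℕ} (hn : n < m) (x : 𝕜) :
    HasDerivAt (iteratedDeriv n f) (iteratedDeriv (n + 1) f x) x := by
  simpa [iteratedDeriv_succ] using (hf.differentiable_iteratedDeriv n hn x).hasDerivAt

theorem Function.Even.iteratedDeriv_neg {F : Type*} [NormedAddCommGroup F] [NormedSpace ℝ F]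
    {f : ℝ → F} (hf : Function.Even f) (n : ℕ) (x : ℝ) :
    iteratedDeriv n f (-x) = (-1 : ℝ) ^ n • iteratedDeriv n f x := by
  have h := iteratedDeriv_comp_neg n f x
  rw [show (fun x => f (-x)) = f from funext hf] at h
  rw [h, smul_smul, ← mul_pow, neg_one_mul, neg_neg, one_pow, one_smul]

theorem Function.Even.iteratedDeriv_zero_of_odd {F : Type*} [NormedAddCommGroup F]
    [NormedSpace ℝ F] {f : ℝ → F} (hf : Function.Even f) {n : ℕ} (hn : Odd n) :
    iteratedDeriv n f 0 = 0 := by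
  have h := hf.iteratedDeriv_neg n 0
  rw [neg_zero, hn.neg_one_pow, neg_one_smul] at h
  have h2 : (2 : ℝ) • iteratedDeriv n f 0 = 0 := by
    rw [two_smul]; nth_rw 1 [h]; exact neg_add_cancel _
  exact (smul_eq_zero.mp h2).resolve_left two_ne_zero

theorem iteratedDeriv_comp_add_div {f : ℝ → ℝ} {n : ℕ} (hf : ContDiff ℝ n f) (a c x : ℝ) :
    iteratedDeriv n (fun y => f ((y + a) / c)) x = c⁻¹ ^ n * iteratedDeriv n f ((x + a) / c) := by
  have h : (fun y => f ((y + a) / c)) = fun y => (fun z => f (z + a / c)) (c⁻¹ * y) := by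
    funext y; ring_nf
  have hshift : ContDiff ℝ n (fun z => f (z + a / c)) := hf.comp (contDiff_id.add contDiff_const)
  rw [h, iteratedDeriv_comp_const_mul hshift, iteratedDeriv_comp_add_const]
  ring_nf

theorem Function.Even.iteratedDeriv_comp_sub_one_div_zero {f : ℝ → ℝ} (hf : Function.Even f)
    {n : ℕ} (hf' : ContDiff ℝ n f) (c : ℝ) :
    iteratedDeriv n (fun y => f ((y - 1) / c)) 0 = (-c⁻¹) ^ n * iteratedDeriv n f c⁻¹ := by
  simp_rw [sub_eq_add_neg]
  rw [iteratedDeriv_comp_add_div hf', zero_add, neg_div, one_div, hf.iteratedDeriv_neg,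
    smul_eq_mul, neg_pow]
  ring

theorem iteratedDeriv_comp_add_one_div_zero {f : ℝ → ℝ} {n : ℕ} (hf : ContDiff ℝ n f) (c : ℝ) :
    iteratedDeriv n (fun y => f ((y + 1) / c)) 0 = c⁻¹ ^ n * iteratedDeriv n f c⁻¹ := by
  rw [iteratedDeriv_comp_add_div hf, zero_add, one_div]

theorem Continuous.continuous_of_inverse {φ ψ : ℝ → ℝ} (hφ : Continuous φ)
    (hl : LeftInverse ψ φ) (hr : RightInverse ψ φ) : Continuous ψ := by
  rcases hφ.strictMono_of_inj hl.injective with hmono | hanti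
  · exact (hmono.orderIsoOfRightInverse φ ψ hr).symm.continuous
  · have hneg : StrictMono (-φ) := fun a b hab => neg_lt_neg (hanti hab)
    have := (hneg.orderIsoOfRightInverse _ (ψ ∘ Neg.neg) fun l => by
      simp [hr (-l)]).symm.continuous
    convert this.comp continuous_neg
    funext l
    exact congrArg ψ (neg_neg l).symm

theorem iteratedDeriv_two_div_deriv_comp_inverse {φ ψ F : ℝ → ℝ} (hφ : ContDiff ℝ 3 φ)
    (hF : ContDiff ℝ 2 F) (hl : LeftInverse ψ φ) (hr : RightInverse ψ φ) {y : ℝ}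
    (h₁ : deriv φ y ≠ 0) (h₂ : iteratedDeriv 2 φ y = 0) (hF₁ : deriv F y = 0) :
    iteratedDeriv 2 (fun l => F (ψ l) / deriv φ (ψ l)) (φ y) =
      (iteratedDeriv 2 F y * deriv φ y - F y * iteratedDeriv 3 φ y) / deriv φ y ^ 4 := by
  have hφ₁ : ∀ z, HasDerivAt φ (deriv φ z) z := fun z =>
    (hφ.differentiable (by norm_num) z).hasDerivAt
  have hφ₂ : ∀ z, HasDerivAt (deriv φ) (iteratedDeriv 2 φ z) z := fun z => by
    simpa using hφ.hasDerivAt_iteratedDeriv_s1 (n := 1) (by norm_num) z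
  have hφ₃ := hφ.hasDerivAt_iteratedDeriv_s1 (n := 2) (by norm_num) y
  have hF₀ : ∀ z, HasDerivAt F (deriv F z) z := fun z =>
    (hF.differentiable (by norm_num) z).hasDerivAt
  have hF₂ : HasDerivAt (deriv F) (iteratedDeriv 2 F y) y := by
    simpa using hF.hasDerivAt_iteratedDeriv_s1 (n := 1) (by norm_num) y
  have hψ : Continuous ψ := hφ.continuous.continuous_of_inverse hl hr
  have hψ' : ∀ l, deriv φ (ψ l) ≠ 0 → HasDerivAt ψ (deriv φ (ψ l))⁻¹ l := fun l hne =>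
    .of_local_left_inverse hψ.continuousAt (hφ₁ _) hne (.of_forall hr)
  set k := fun z => (deriv F z * deriv φ z - F z * iteratedDeriv 2 φ z) / deriv φ z ^ 3
  have hfirst : deriv (fun l => F (ψ l) / deriv φ (ψ l)) =ᶠ[𝓝 (φ y)] fun l => k (ψ l) := by
    have hopen : IsOpen {l | deriv φ (ψ l) ≠ 0} :=
      isOpen_compl_singleton.preimage ((hφ.continuous_deriv (by norm_num)).comp hψ)
    filter_upwards [hopen.mem_nhds (show deriv φ (ψ (φ y)) ≠ 0 by rwa [hl y])] with l hne
    refine (((hF₀ _).div (hφ₂ _) hne).comp l (hψ' l hne)).deriv.trans ?_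
    simp only [k]
    field_simp
  have hk : HasDerivAt k
      ((iteratedDeriv 2 F y * deriv φ y - F y * iteratedDeriv 3 φ y) / deriv φ y ^ 3) y := by
    refine (((hF₂.mul (hφ₂ y)).sub ((hF₀ y).mul hφ₃)).div ((hφ₂ y).pow 3)
      (pow_ne_zero 3 h₁)).congr_deriv ?_
    simp only [Pi.pow_apply, Pi.sub_apply, Pi.mul_apply, h₂, hF₁]
    field_simp
    ring
  rw [iteratedDeriv_succ, iteratedDeriv_one, hfirst.deriv_eq]
  refine (hk.comp_of_eq (φ y) (hψ' _ (by rwa [hl y])) (hl y).symm).deriv.trans ?_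
  rw [hl y]
  field_simp

theorem iteratedDeriv_two_log_of_deriv_eq_zero {f : ℝ → ℝ} (hf : ContDiff ℝ 2 f)
    (hf₀ : ∀ x, f x ≠ 0) {x : ℝ} (hx : deriv f x = 0) :
    iteratedDeriv 2 (fun y => Real.log (f y)) x = iteratedDeriv 2 f x / f x := by
  have hd : deriv (fun y => Real.log (f y)) = fun y => deriv f y / f y :=
    funext fun y => ((hf.differentiable (by norm_num) y).hasDerivAt.log (hf₀ y)).deriv
  have h₂ : HasDerivAt (deriv f) (iteratedDeriv 2 f x) x := by
    simpa using hf.hasDerivAt_iteratedDeriv_s1 (n := 1) (by norm_num) x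
  rw [iteratedDeriv_succ, iteratedDeriv_one, hd]
  refine (h₂.div (hf.differentiable (by norm_num) x).hasDerivAt (hf₀ x)).deriv.trans ?_
  rw [hx, mul_zero, sub_zero, sq, mul_div_mul_right _ _ (hf₀ x)]

theorem isBigO_div_pow_four_of_hasDerivAt {a b u v : ℝ → ℝ} {u' v' : ℝ} (ha : ContinuousAt a 0)
    (hb : ContinuousAt b 0) (hu : HasDerivAt u u' 0) (hv : HasDerivAt v v' 0) (hu₀ : u 0 = 0)
    (hv₀ : v 0 = 0) (hu' : u' ≠ 0) :
    (fun t => (a t * v t - b t * u t) / u t ^ 4) =O[𝓝[≠] 0] fun t => (t ^ 3)⁻¹ := by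
  have hslope {w : ℝ → ℝ} {w' : ℝ} (hw : HasDerivAt w w' 0) (hw₀ : w 0 = 0) :
      Tendsto (fun t => w t / t) (𝓝[≠] 0) (𝓝 w') := by
    simpa [hw₀, div_eq_inv_mul] using hw.tendsto_slope_zero
  have hlim : Tendsto (fun t => (a t * (v t / t) - b t * (u t / t)) / (u t / t) ^ 4) (𝓝[≠] 0)
      (𝓝 ((a 0 * v' - b 0 * u') / u' ^ 4)) :=
    (((ha.tendsto.mono_left nhdsWithin_le_nhds).mul (hslope hv hv₀)).sub
      ((hb.tendsto.mono_left nhdsWithin_le_nhds).mul (hslope hu hu₀))).div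
      ((hslope hu hu₀).pow 4) (pow_ne_zero 4 hu')
  refine isBigO_of_div_tendsto_nhds ?_ _ (hlim.congr' ?_)
  · filter_upwards [self_mem_nhdsWithin] with t (ht : t ≠ 0) h
    exact absurd h (by positivity)
  · filter_upwards [self_mem_nhdsWithin, hu.eventually_ne hu'] with t (ht : t ≠ 0) hut
    simp only [Pi.div_apply]
    field_simp

noncomputable def llr (f₀ : ℝ → ℝ) (σ y : ℝ) : ℝ :=
  Real.log (f₀ ((y - 1) / σ)) - Real.log (f₀ ((y + 1) / σ))

noncomputable def outputDensity (f₀ : ℝ → ℝ) (σ y : ℝ) : ℝ :=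
  ((1 / σ) * f₀ ((y - 1) / σ) + (1 / σ) * f₀ ((y + 1) / σ)) / 2

noncomputable def llrDensity (f₀ : ℝ → ℝ) (σ : ℝ) (ψ : ℝ → ℝ) (l : ℝ) : ℝ :=
  outputDensity f₀ σ (ψ l) / deriv (llr f₀ σ) (ψ l)

section

variable {f₀ : ℝ → ℝ} {n : ℕ}

theorem contDiff_llr (hf₀ : ContDiff ℝ n f₀) (hpos : ∀ x, 0 < f₀ x) (σ : ℝ) :
    ContDiff ℝ n (llr f₀ σ) := by
  have hg := hf₀.log fun x => (hpos x).ne'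
  exact (hg.comp (by fun_prop)).sub (hg.comp (by fun_prop))

theorem iteratedDeriv_llr_zero (heven : Function.Even f₀) (hf₀ : ContDiff ℝ n f₀)
    (hpos : ∀ x, 0 < f₀ x) (σ : ℝ) :
    iteratedDeriv n (llr f₀ σ) 0 =
      ((-σ⁻¹) ^ n - σ⁻¹ ^ n) * iteratedDeriv n (fun x => Real.log (f₀ x)) σ⁻¹ := by
  have hg := hf₀.log fun x => (hpos x).ne'
  have hgeven : Function.Even fun x => Real.log (f₀ x) := fun x => congrArg Real.log (heven x)
  have h₁ : ContDiff ℝ n fun y => Real.log (f₀ ((y - 1) / σ)) := hg.comp (by fun_prop)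
  have h₂ : ContDiff ℝ n fun y => Real.log (f₀ ((y + 1) / σ)) := hg.comp (by fun_prop)
  unfold llr
  rw [iteratedDeriv_fun_sub h₁.contDiffAt h₂.contDiffAt,
    hgeven.iteratedDeriv_comp_sub_one_div_zero hg, iteratedDeriv_comp_add_one_div_zero hg]
  ring

theorem contDiff_outputDensity (hf₀ : ContDiff ℝ n f₀) (σ : ℝ) :
    ContDiff ℝ n (outputDensity f₀ σ) := by
  unfold outputDensity
  fun_prop

theorem iteratedDeriv_outputDensity_zero (heven : Function.Even f₀) (hf₀ : ContDiff ℝ n f₀)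
    (σ : ℝ) :
    iteratedDeriv n (outputDensity f₀ σ) 0 =
      σ⁻¹ / 2 * ((-σ⁻¹) ^ n + σ⁻¹ ^ n) * iteratedDeriv n f₀ σ⁻¹ := by
  have h : outputDensity f₀ σ = fun y => σ⁻¹ / 2 * (f₀ ((y - 1) / σ) + f₀ ((y + 1) / σ)) := by
    funext y; unfold outputDensity; ring
  rw [h, iteratedDeriv_const_mul_field, iteratedDeriv_fun_add (by fun_prop) (by fun_prop),
    heven.iteratedDeriv_comp_sub_one_div_zero hf₀, iteratedDeriv_comp_add_one_div_zero hf₀]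
  ring

end

theorem iteratedDeriv_two_llrDensity_zero {f₀ ψ : ℝ → ℝ} (heven : Function.Even f₀)
    (hf₀ : ContDiff ℝ 3 f₀) (hpos : ∀ x, 0 < f₀ x) {σ : ℝ} (hσ : σ ≠ 0)
    (hl : LeftInverse ψ (llr f₀ σ)) (hr : RightInverse ψ (llr f₀ σ))
    (hg : deriv (fun x => Real.log (f₀ x)) σ⁻¹ ≠ 0) :
    iteratedDeriv 2 (llrDensity f₀ σ ψ) 0 =
      (f₀ σ⁻¹ * iteratedDeriv 3 (fun x => Real.log (f₀ x)) σ⁻¹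
          - iteratedDeriv 2 f₀ σ⁻¹ * deriv (fun x => Real.log (f₀ x)) σ⁻¹)
        / (8 * deriv (fun x => Real.log (f₀ x)) σ⁻¹ ^ 4) := by
  have hllr (n : ℕ) (hn : n ≤ 3) :=
    iteratedDeriv_llr_zero heven (hf₀.of_le (by exact_mod_cast hn)) hpos σ (n := n)
  have hout (n : ℕ) (hn : n ≤ 3) :=
    iteratedDeriv_outputDensity_zero heven (hf₀.of_le (by exact_mod_cast hn)) σ (n := n)
  have hllr₁ : deriv (llr f₀ σ) 0 = -2 * σ⁻¹ * deriv (fun x => Real.log (f₀ x)) σ⁻¹ := by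
    rw [← iteratedDeriv_one, hllr 1 (by norm_num), iteratedDeriv_one]
    ring
  have hllr₀ : llr f₀ σ 0 = 0 := by
    rw [llr, zero_sub, zero_add, neg_div, heven, sub_self]
  have key := iteratedDeriv_two_div_deriv_comp_inverse (contDiff_llr hf₀ hpos σ)
    (contDiff_outputDensity (hf₀.of_le (by norm_num)) σ) hl hr (y := 0)
    (by rw [hllr₁]; simp [hσ, hg]) (by simpa using hllr 2 (by norm_num))
    (by simpa using hout 1 (by norm_num))
  have hout₀ := hout 0 (by norm_num)
  rw [iteratedDeriv_zero, iteratedDeriv_zero] at hout₀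
  rw [hllr₀] at key
  unfold llrDensity
  rw [key, hllr₁, hllr 3 le_rfl, hout 2 (by norm_num), hout₀]
  field_simp
  ring

theorem fL_second_deriv_bigO_general
    (f₀ : ℝ → ℝ)
    (hpos : ∀ x, 0 < f₀ x)
    (heven : ∀ x, f₀ (-x) = f₀ x)
    (hC4 : ContDiff ℝ 4 f₀)
    (h20 : iteratedDeriv 2 f₀ 0 < 0)
    (φ ψ : ℝ → ℝ → ℝ)
    (hφ : ∀ σ > (0:ℝ), ∀ y : ℝ,
      φ σ y = Real.log (f₀ ((y - 1) / σ)) - Real.log (f₀ ((y + 1) / σ)))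
    (hψl : ∀ σ > (0:ℝ), Function.LeftInverse (ψ σ) (φ σ))
    (hψr : ∀ σ > (0:ℝ), Function.RightInverse (ψ σ) (φ σ))
    (fY : ℝ → ℝ → ℝ)
    (hfY : ∀ σ > (0:ℝ), ∀ y : ℝ,
      fY σ y = ((1 / σ) * f₀ ((y - 1) / σ) + (1 / σ) * f₀ ((y + 1) / σ)) / 2)
    (fL : ℝ → ℝ → ℝ)
    (hfL : ∀ σ > (0:ℝ), ∀ l : ℝ,
      fL σ l = fY σ (ψ σ l) / deriv (φ σ) (ψ σ l)) :
    (fun σ : ℝ => iteratedDeriv 2 (fL σ) 0) =O[Filter.atTop]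
      (fun σ : ℝ => σ ^ 3) := by
  set g := fun x => Real.log (f₀ x)
  have hg : ContDiff ℝ 4 g := hC4.log fun x => (hpos x).ne'
  have hgeven : Function.Even g := fun x => congrArg Real.log (heven x)
  have hg₁ : deriv g 0 = 0 := by simpa using hgeven.iteratedDeriv_zero_of_odd odd_one
  have hg₂ : iteratedDeriv 2 g 0 ≠ 0 := by
    rw [iteratedDeriv_two_log_of_deriv_eq_zero (hC4.of_le (by norm_num)) (fun x => (hpos x).ne')
      (by simpa using Function.Even.iteratedDeriv_zero_of_odd heven odd_one)]
    exact div_ne_zero h20.ne (hpos 0).ne'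
  have hu : HasDerivAt (deriv g) (iteratedDeriv 2 g 0) 0 := by
    simpa using hg.hasDerivAt_iteratedDeriv_s1 (n := 1) (by norm_num) 0
  have hinv : Tendsto (fun σ : ℝ => σ⁻¹) atTop (𝓝[≠] 0) :=
    tendsto_inv_atTop_nhdsGT_zero.mono_right (nhdsGT_le_nhdsNE 0)
  have hclosed : (fun σ : ℝ => iteratedDeriv 2 (fL σ) 0) =ᶠ[atTop] fun σ => 8⁻¹ *
      ((f₀ σ⁻¹ * iteratedDeriv 3 g σ⁻¹ - iteratedDeriv 2 f₀ σ⁻¹ * deriv g σ⁻¹) /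
        deriv g σ⁻¹ ^ 4) := by
    filter_upwards [eventually_gt_atTop 0, hinv.eventually (hu.eventually_ne hg₂)] with σ hσ hgσ
    have hφσ : φ σ = llr f₀ σ := funext (hφ σ hσ)
    have hfLσ : fL σ = llrDensity f₀ σ (ψ σ) := by
      funext l
      rw [hfL σ hσ, hfY σ hσ, hφσ, llrDensity, outputDensity]
    rw [hfLσ, iteratedDeriv_two_llrDensity_zero heven (hC4.of_le (by norm_num)) hpos hσ.ne'
      (hφσ ▸ hψl σ hσ) (hφσ ▸ hψr σ hσ) hgσ]
    ring
  have hΦ := isBigO_div_pow_four_of_hasDerivAt hC4.continuous.continuousAt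
    (hC4.continuous_iteratedDeriv 2 (by norm_num)).continuousAt hu
    (hg.hasDerivAt_iteratedDeriv_s1 (n := 3) (by norm_num) 0) hg₁
    (hgeven.iteratedDeriv_zero_of_odd ⟨1, rfl⟩) hg₂
  refine ((hΦ.const_mul_left 8⁻¹).comp_tendsto hinv).congr' hclosed.symm (.of_forall fun σ => ?_)
  simp

/-- As `σ → ∞`, `f_L''(0) = O(σ³)`, where `f_L` is the density of the log-likelihood
ratio for a binary-input additive-noise channel whose noise has density
`f_N(x) = (1/σ) f₀(x/σ)` with `f₀` an even, strictly log-concave, `C⁴` probability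
density satisfying `f₀(0) > 0` and `f₀''(0) < 0`. -/
theorem fL_second_deriv_bigO
    (f₀ : ℝ → ℝ)
    (hpos : ∀ x, 0 < f₀ x)
    (heven : ∀ x, f₀ (-x) = f₀ x)
    (hlogconc : StrictConcaveOn ℝ Set.univ (fun x => Real.log (f₀ x)))
    (hC4 : ContDiff ℝ 4 f₀)
    (hdens : ∫ x : ℝ, f₀ x = 1)
    (h00 : 0 < f₀ 0)
    (h20 : iteratedDeriv 2 f₀ 0 < 0)
    (φ ψ : ℝ → ℝ → ℝ)
    (hφ : ∀ σ > (0:ℝ), ∀ y : ℝ,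
      φ σ y = Real.log (f₀ ((y - 1) / σ)) - Real.log (f₀ ((y + 1) / σ)))
    (hψl : ∀ σ > (0:ℝ), Function.LeftInverse (ψ σ) (φ σ))
    (hψr : ∀ σ > (0:ℝ), Function.RightInverse (ψ σ) (φ σ))
    (fY : ℝ → ℝ → ℝ)
    (hfY : ∀ σ > (0:ℝ), ∀ y : ℝ,
      fY σ y = ((1 / σ) * f₀ ((y - 1) / σ) + (1 / σ) * f₀ ((y + 1) / σ)) / 2)
    (fL : ℝ → ℝ → ℝ)
    (hfL : ∀ σ > (0:ℝ), ∀ l : ℝ,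
      fL σ l = fY σ (ψ σ l) / deriv (φ σ) (ψ σ l)) :
    (fun σ : ℝ => iteratedDeriv 2 (fL σ) 0) =O[Filter.atTop]
      (fun σ : ℝ => σ ^ 3) :=
  fL_second_deriv_bigO_general f₀ hpos heven hC4 h20 φ ψ hφ hψl hψr fY hfY fL hfL
end

section
/- Let β > 0 and α ∈ (−1,0) ∪ (0,∞). Then lim_{n→∞} (1/n) · α · H_{1/(1+α)}(p_{N^n}) = (1+α)·J(1; β/(1+α)) − J(1; β). -/
open Finset

/-- `J(r;γ) = ∫₀¹ ln(1 + r e^{−γx}) dx`. -/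
noncomputable def Jint (r γ : ℝ) : ℝ :=
  ∫ x in (0:ℝ)..1, Real.log (1 + r * Real.exp (-γ * x))

/-- The Rényi entropy of order `a` (in nats) of a PMF `p` on a finite set. -/
noncomputable def renyiEntropy {X : Type*} [Fintype X] (a : ℝ) (p : X → ℝ) : ℝ :=
  (1 / (1 - a)) * Real.log (∑ x, p x ^ a)

/-- The soft-decision LRC noise PMF on `{0,1}^n`:
`p_{N^n}(x) = e^{−β w(x)/n} / ∏_{i=1}^n (1 + e^{−β i/n})`, where
`w(x) = ∑_{i : x_i = 1} i` (index `i : Fin n` representing the symbol `i+1`). -/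
noncomputable def pN (β : ℝ) (n : ℕ) (x : Fin n → Bool) : ℝ :=
  Real.exp (-β * (∑ i ∈ univ.filter (fun i => x i = true), (((i : ℕ) : ℝ) + 1)) / n) /
    ∏ i ∈ Finset.Icc 1 n, (1 + Real.exp (-β * (i : ℝ) / n))

/-!
The weight `w` is additive over coordinates, so the Rényi sum of `pN β n` factorizes:
`∑ₓ pN(x)^a = Z(aβ, n) / Z(β, n)^a` with `Z(γ, n) = ∏_{i=1}^n (1 + e^{−γ i/n})`, whence
`α · H_{1/(1+α)}(pN) = (1+α) log Z(β/(1+α), n) − log Z(β, n)`. Finally `(1/n) log Z(γ, n)` is a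
Riemann sum of the monotone function `x ↦ log (1 + e^{−γx})`, so it tends to `J(1; γ)`.
-/

open Filter Topology Real

noncomputable def riemannSum (f : ℝ → ℝ) (n : ℕ) : ℝ :=
  (∑ i ∈ range n, f ((i + 1) / n)) / n

namespace AntitoneOn

variable {f : ℝ → ℝ}

theorem riemannSum_bounds (hf : AntitoneOn f (Set.Icc 0 1)) {n : ℕ} (hn : 0 < n) :
    (∫ x in 0..1, f x) - (f 0 - f 1) / n ≤ riemannSum f n ∧
      riemannSum f n ≤ ∫ x in 0..1, f x := by
  have hn' : (0 : ℝ) < n := Nat.cast_pos.mpr hn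
  set g : ℝ → ℝ := fun u => f (u / n)
  have hg : AntitoneOn g (Set.Icc 0 (0 + n)) := by
    intro u ⟨hu0, hun⟩ v ⟨hv0, hvn⟩ huv
    rw [zero_add] at hun hvn
    refine hf ⟨by positivity, ?_⟩ ⟨by positivity, ?_⟩ (by gcongr) <;>
      rwa [div_le_one hn']
  have hint : ∫ u in 0..0 + (n : ℝ), g u = n * ∫ x in 0..1, f x := by
    rw [intervalIntegral.integral_comp_div f hn'.ne', zero_div, zero_add, div_self hn'.ne',
      smul_eq_mul]
  have hsum : ∀ i : ℕ, g (0 + ↑(i + 1)) = f ((i + 1) / n) := fun i => by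
    simp only [g, zero_add, Nat.cast_succ]
  have htelescope :
      ∑ i ∈ range n, g (0 + i) = (∑ i ∈ range n, f ((i + 1) / n)) + (f 0 - f 1) := by
    have h := sum_range_succ' (fun i : ℕ => g i) n
    rw [sum_range_succ] at h
    simp only [g, zero_add, Nat.cast_succ, CharP.cast_eq_zero, zero_div,
      div_self hn'.ne'] at h ⊢
    linarith
  have hlow := hg.integral_le_sum
  have hupp := hg.sum_le_integral
  simp only [hsum] at hupp
  rw [hint, htelescope] at hlow
  rw [hint] at hupp
  unfold riemannSum
  constructor
  · rw [sub_le_iff_le_add, ← add_div, le_div_iff₀ hn']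
    linarith
  · rw [div_le_iff₀ hn']
    linarith

theorem tendsto_riemannSum (hf : AntitoneOn f (Set.Icc 0 1)) :
    Tendsto (riemannSum f) atTop (𝓝 (∫ x in 0..1, f x)) := by
  have hlow : Tendsto (fun n : ℕ => (∫ x in 0..1, f x) - (f 0 - f 1) / n) atTop
      (𝓝 (∫ x in 0..1, f x)) := by
    simpa using tendsto_const_nhds.sub
      (tendsto_const_div_atTop_nhds_zero_nat (f 0 - f 1))
  refine tendsto_of_tendsto_of_tendsto_of_le_of_le' hlow tendsto_const_nhds ?_ ?_ <;>
  filter_upwards [eventually_gt_atTop 0] with n hn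
  exacts [(hf.riemannSum_bounds hn).1, (hf.riemannSum_bounds hn).2]

end AntitoneOn

theorem MonotoneOn.tendsto_riemannSum {f : ℝ → ℝ} (hf : MonotoneOn f (Set.Icc 0 1)) :
    Tendsto (riemannSum f) atTop (𝓝 (∫ x in 0..1, f x)) := by
  have h := hf.neg.tendsto_riemannSum.neg
  simp only [riemannSum, sum_neg_distrib, neg_div, neg_neg, intervalIntegral.integral_neg] at h
  exact h

noncomputable def softPartition (γ : ℝ) (n : ℕ) : ℝ :=
  ∏ i ∈ Icc 1 n, (1 + exp (-γ * i / n))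

theorem softPartition_pos (γ : ℝ) (n : ℕ) : 0 < softPartition γ n :=
  prod_pos fun _ _ => by positivity

theorem sum_exp_sum_filter {ι : Type*} [Fintype ι] [DecidableEq ι] (w : ι → ℝ) :
    ∑ x : ι → Bool, exp (∑ i ∈ univ.filter (fun i => x i = true), w i) =
      ∏ i, (1 + exp (w i)) := by
  calc _ = ∑ x : ι → Bool, ∏ i, (if x i = true then exp (w i) else 1) :=
        sum_congr rfl fun x _ => by rw [exp_sum, prod_filter]
    _ = ∏ i, ∑ b : Bool, (if b = true then exp (w i) else 1) :=
        (Fintype.prod_sum fun i (b : Bool) => if b = true then exp (w i) else 1).symm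
    _ = _ := by simp [add_comm]

theorem sum_exp_weight_eq_softPartition (γ : ℝ) (n : ℕ) :
    ∑ x : Fin n → Bool,
        exp (-γ * (∑ i ∈ univ.filter (fun i => x i = true), (((i : ℕ) : ℝ) + 1)) / n) =
      softPartition γ n := by
  have h := sum_exp_sum_filter fun i : Fin n => -γ * (((i : ℕ) : ℝ) + 1) / n
  simp only [← sum_div, ← mul_sum] at h
  rw [h, Fin.prod_univ_eq_prod_range (fun i => 1 + exp (-γ * ((i : ℝ) + 1) / n)), softPartition,
    ← Ico_add_one_right_eq_Icc, prod_Ico_eq_prod_range]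
  refine prod_congr (by simp) fun i _ => ?_
  push_cast
  ring_nf

theorem log_sum_rpow_pN (β a : ℝ) (n : ℕ) :
    log (∑ x, pN β n x ^ a) = log (softPartition (a * β) n) - a * log (softPartition β n) := by
  have hZ := softPartition_pos β n
  have hpow : ∀ x, pN β n x ^ a =
      exp (-(a * β) * (∑ i ∈ univ.filter (fun i => x i = true), (((i : ℕ) : ℝ) + 1)) / n) /
        softPartition β n ^ a := fun x => by
    rw [pN, ← softPartition, div_rpow (exp_pos _).le hZ.le, ← exp_mul]
    ring_nf
  rw [sum_congr rfl fun x _ => hpow x, ← sum_div, sum_exp_weight_eq_softPartition,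
    log_div (softPartition_pos _ n).ne' (rpow_pos_of_pos hZ a).ne', log_rpow hZ]

theorem mul_renyiEntropy_pN (β : ℝ) {α : ℝ} (hα : 1 + α ≠ 0) (n : ℕ) :
    α * renyiEntropy (1 / (1 + α)) (pN β n) =
      (1 + α) * log (softPartition (β / (1 + α)) n) - log (softPartition β n) := by
  rw [renyiEntropy, log_sum_rpow_pN, one_div_mul_eq_div]
  -- at `α = 0` the order is `1`, and `1 / (1 - 1) = 0` makes both sides vanish
  rcases eq_or_ne α 0 with rfl | hα0
  · simp
  · rw [one_sub_div hα, add_sub_cancel_left]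
    field_simp

theorem log_softPartition_div_eq_riemannSum (γ : ℝ) (n : ℕ) :
    log (softPartition γ n) / n = riemannSum (fun x => log (1 + exp (-γ * x))) n := by
  rw [softPartition, log_prod fun i _ => by positivity, ← Ico_add_one_right_eq_Icc,
    sum_Ico_eq_sum_range, riemannSum]
  refine congrArg (· / (n : ℝ)) (sum_congr rfl fun i _ => ?_)
  push_cast
  ring_nf

theorem tendsto_log_softPartition_div (γ : ℝ) :
    Tendsto (fun n : ℕ => log (softPartition γ n) / n) atTop (𝓝 (Jint 1 γ)) := by
  simp only [log_softPartition_div_eq_riemannSum, Jint, one_mul]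
  have hmono : Monotone fun t : ℝ => log (1 + exp t) :=
    fun s t hst => log_le_log (by positivity) (by gcongr)
  rcases le_total 0 γ with hγ | hγ
  · exact AntitoneOn.tendsto_riemannSum <| (hmono.comp_antitone fun x y hxy =>
      mul_le_mul_of_nonpos_left hxy (neg_nonpos.2 hγ)).antitoneOn _
  · exact MonotoneOn.tendsto_riemannSum <| (hmono.comp fun x y hxy =>
      mul_le_mul_of_nonneg_left hxy (neg_nonneg.2 hγ)).monotoneOn _

theorem soft_renyi_rate_general (β : ℝ) (α : ℝ) (hα : -1 < α) :
    Filter.Tendsto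
      (fun n : ℕ => (1 / (n : ℝ)) * (α * renyiEntropy (1 / (1 + α)) (pN β n)))
      Filter.atTop
      (nhds ((1 + α) * Jint 1 (β / (1 + α)) - Jint 1 β)) := by
  have hlim := ((tendsto_log_softPartition_div (β / (1 + α))).const_mul (1 + α)).sub
    (tendsto_log_softPartition_div β)
  refine hlim.congr fun n => ?_
  rw [mul_renyiEntropy_pN β (by linarith : 0 < 1 + α).ne' n]
  ring

theorem soft_renyi_rate (β : ℝ) (hβ : 0 < β) (α : ℝ) (hα : -1 < α) (hα0 : α ≠ 0) :
    Filter.Tendsto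
      (fun n : ℕ => (1 / (n : ℝ)) * (α * renyiEntropy (1 / (1 + α)) (pN β n)))
      Filter.atTop
      (nhds ((1 + α) * Jint 1 (β / (1 + α)) - Jint 1 β)) :=
  soft_renyi_rate_general β α hα
end

section
/- Fix α > −1 and β > 0. The function f_{α,β}(t) = α h(t) + J(r_{t,β}; β) − t ln r_{t,β} is strictly concave on (0,1). -/
/-- `r_{t,β} = (e^{βt} − 1)/(1 − e^{β(t−1)})`. -/
noncomputable def rtβ (t β : ℝ) : ℝ :=
  (Real.exp (β * t) - 1) / (1 - Real.exp (β * (t - 1)))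

/-- The binary entropy function (in nats). -/
noncomputable def binEnt (t : ℝ) : ℝ := -t * Real.log t - (1 - t) * Real.log (1 - t)

/-!
Write `f = (α + 1) h + G` with `G t = J(r_t; β) - t ln r_t - h(t)`. Since `(α + 1) h` is strictly
concave, it suffices that `G` is concave. The choice of `r_t` is exactly the one making
`1 + r_t = e^{βt} (1 + r_t e^{-β})`, so `∂_r J(r_t; β) = t / r_t` and the derivative of
`J(r_t; β) - t ln r_t` is `-ln r_t`; hence `G' t = -ln (r_t (1 - t) / t)`. Finally
`r_t = e^{β/2} sinh(βt/2) / sinh(β(1-t)/2)`, so `r_t (1 - t) / t` is a positive multiple of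
`S(βt/2) / S(β(1-t)/2)` with `S u = sinh u / u`, which increases on `(0, ∞)` because `sinh` is
convex there; thus `G'` is antitone.
-/

open Real Set

lemma StrictConcaveOn.const_mul {E : Type*} [AddCommMonoid E] [Module ℝ E] {s : Set E}
    {f : E → ℝ} {c : ℝ} (hc : 0 < c) (hf : StrictConcaveOn ℝ s f) :
    StrictConcaveOn ℝ s fun x => c * f x := by
  refine ⟨hf.1, fun x hx y hy hxy a b ha hb hab => ?_⟩
  have h := mul_lt_mul_of_pos_left (hf.2 hx hy hxy ha hb hab) hc
  simp only [smul_eq_mul] at h ⊢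
  linarith

lemma convexOn_sinh_Ici : ConvexOn ℝ (Ici 0) sinh := by
  refine MonotoneOn.convexOn_of_deriv (convex_Ici 0) continuous_sinh.continuousOn
    differentiable_sinh.differentiableOn ?_
  rw [Real.deriv_sinh, interior_Ici]
  intro x hx y hy hxy
  exact cosh_le_cosh.2 (by rwa [abs_of_pos hx, abs_of_pos hy])

lemma monotoneOn_sinh_div_self : MonotoneOn (fun u => sinh u / u) (Ioi 0) := by
  intro x hx y hy hxy
  simpa using convexOn_sinh_Ici.secant_mono (mem_Ici.2 le_rfl) (mem_Ioi.1 hx).le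
    (mem_Ioi.1 hy).le hx.ne' hy.ne' hxy

lemma binEnt_eq_binEntropy : binEnt = binEntropy := by
  funext t
  simp only [binEnt, binEntropy, log_inv]
  ring

lemma rtβ_eq_sinh (t β : ℝ) :
    rtβ t β = exp (β / 2) * sinh (β * t / 2) / sinh (β * (1 - t) / 2) := by
  have ha : exp (β * t) = exp (β * t / 2) ^ 2 := by rw [← exp_nat_mul]; ring_nf
  have hb : exp (β * (t - 1)) = (exp (β * (1 - t) / 2) ^ 2)⁻¹ := by
    rw [← exp_nat_mul, ← exp_neg]; ring_nf
  have hab : exp (β / 2) = exp (β * t / 2) * exp (β * (1 - t) / 2) := by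
    rw [← exp_add]; ring_nf
  rw [rtβ, sinh_eq, sinh_eq, ha, hb, hab, exp_neg, exp_neg]
  set a := exp (β * t / 2)
  set b := exp (β * (1 - t) / 2)
  have ha0 : a ≠ 0 := (exp_pos _).ne'
  have hb0 : b ≠ 0 := (exp_pos _).ne'
  rw [show 1 - (b ^ 2)⁻¹ = (b - b⁻¹) / b by field_simp,
    show a ^ 2 - 1 = a * (a - a⁻¹) by field_simp]
  rw [div_div_eq_mul_div, div_div_eq_mul_div]
  ring

lemma integral_exp_div_one_add_mul_exp {γ r : ℝ} (hγ : γ ≠ 0) (hr : 0 < r) :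
    ∫ x in (0:ℝ)..1, exp (-γ * x) / (1 + r * exp (-γ * x))
      = (γ * r)⁻¹ * (log (1 + r) - log (1 + r * exp (-γ))) := by
  have hderiv : ∀ x ∈ uIcc (0:ℝ) 1,
      HasDerivAt (fun x => -(γ * r)⁻¹ * log (1 + r * exp (-γ * x)))
        (exp (-γ * x) / (1 + r * exp (-γ * x))) x := by
    intro x _
    have h := ((((hasDerivAt_id' x).const_mul (-γ)).exp.const_mul r).const_add 1).log
      (by positivity) |>.const_mul (-(γ * r)⁻¹)
    refine h.congr_deriv ?_
    field_simp
  have hcont : Continuous fun x => exp (-γ * x) / (1 + r * exp (-γ * x)) := by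
    fun_prop (disch := exact fun x => by positivity)
  rw [intervalIntegral.integral_eq_sub_of_hasDerivAt hderiv (hcont.intervalIntegrable 0 1)]
  simp only [mul_zero, mul_one, exp_zero]
  ring

lemma hasDerivAt_Jint {γ r : ℝ} (hγ : γ ≠ 0) (hr : 0 < r) :
    HasDerivAt (fun s => Jint s γ)
      ((γ * r)⁻¹ * (log (1 + r) - log (1 + r * exp (-γ)))) r := by
  have hpos {s : ℝ} (x : ℝ) (hs : 0 < s) : 0 < 1 + s * exp (-γ * x) := by positivity
  have h := intervalIntegral.hasDerivAt_integral_of_dominated_loc_of_deriv_le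
    (μ := MeasureTheory.volume) (a := 0) (b := 1)
    (F := fun s x => log (1 + s * exp (-γ * x)))
    (F' := fun s x => exp (-γ * x) / (1 + s * exp (-γ * x)))
    (bound := fun x => exp (-γ * x)) (Ioi_mem_nhds hr) ?_ ?_ ?_ ?_ ?_ ?_
  · rw [← integral_exp_div_one_add_mul_exp hγ hr]
    exact h.2
  · exact Filter.Eventually.of_forall fun s =>
      (measurable_log.comp (by fun_prop)).aestronglyMeasurable
  · exact (by fun_prop (disch := exact fun x => (hpos x hr).ne') :
      Continuous fun x => log (1 + r * exp (-γ * x))).intervalIntegrable 0 1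
  · exact (by fun_prop (disch := exact fun x => (hpos x hr).ne') :
      Continuous fun x => exp (-γ * x) / (1 + r * exp (-γ * x))).aestronglyMeasurable
  · refine Filter.Eventually.of_forall fun x _ s hs => ?_
    rw [norm_of_nonneg (by positivity [hpos x hs])]
    exact div_le_self (exp_pos _).le (le_add_of_nonneg_right (by positivity [mem_Ioi.1 hs]))
  · exact (by fun_prop : Continuous fun x => exp (-γ * x)).intervalIntegrable 0 1
  · refine Filter.Eventually.of_forall fun x _ s hs => ?_
    exact ((hasDerivAt_mul_const (exp (-γ * x))).const_add 1).log (hpos x hs).ne'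

/-- Envelope identity: when `J' (r t) = t / r t`, the two terms containing `r'` cancel. -/
lemma HasDerivAt.comp_sub_mul_log {J r : ℝ → ℝ} {t r' : ℝ}
    (hJ : HasDerivAt J (t / r t) (r t)) (hr : HasDerivAt r r' t) (hr0 : r t ≠ 0) :
    HasDerivAt (fun s => J (r s) - s * Real.log (r s)) (-Real.log (r t)) t := by
  refine ((hJ.comp t hr).sub ((hasDerivAt_id' t).mul (hr.log hr0))).congr_deriv ?_
  field_simp
  ring

section rtβ

variable {t β : ℝ}

lemma rtβ_pos (hβ : 0 < β) (ht : t ∈ Ioo 0 1) : 0 < rtβ t β := by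
  have := ht.1; have := sub_pos.2 ht.2
  rw [rtβ_eq_sinh]
  exact div_pos (mul_pos (exp_pos _) (sinh_pos_iff.2 (by positivity)))
    (sinh_pos_iff.2 (by positivity))

lemma hasDerivAt_Jint_rtβ (hβ : 0 < β) (ht : t ∈ Ioo 0 1) :
    HasDerivAt (fun s => Jint s β) (t / rtβ t β) (rtβ t β) := by
  have hr := rtβ_pos hβ ht
  have hden : 1 - exp (β * t) * exp (-β) ≠ 0 := by
    rw [← exp_add, sub_ne_zero, ne_comm, Ne, exp_eq_one_iff]
    nlinarith [ht.2]
  have hshift : log (1 + rtβ t β) - log (1 + rtβ t β * exp (-β)) = β * t := by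
    have h : 1 + rtβ t β = exp (β * t) * (1 + rtβ t β * exp (-β)) := by
      rw [rtβ, show β * (t - 1) = β * t + -β by ring, exp_add]
      field_simp
      ring
    rw [h, log_mul (exp_pos _).ne' (by positivity), log_exp]
    ring
  convert hasDerivAt_Jint hβ.ne' hr using 1
  rw [hshift]
  field_simp

lemma hasDerivAt_Jint_rtβ_sub_mul_log (hβ : 0 < β) (ht : t ∈ Ioo 0 1) :
    HasDerivAt (fun s => Jint (rtβ s β) β - s * log (rtβ s β)) (-log (rtβ t β)) t := by
  have hden : 1 - exp (β * (t - 1)) ≠ 0 := by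
    rw [sub_ne_zero, ne_comm, Ne, exp_eq_one_iff]
    nlinarith [ht.2]
  have hdiff : DifferentiableAt ℝ (fun s => rtβ s β) t :=
    (by fun_prop : DifferentiableAt ℝ (fun s => exp (β * s) - 1) t).div (by fun_prop) hden
  exact (hasDerivAt_Jint_rtβ hβ ht).comp_sub_mul_log hdiff.hasDerivAt (rtβ_pos hβ ht).ne'

lemma rtβ_mul_one_sub_div (hβ : 0 < β) (ht : t ∈ Ioo 0 1) :
    rtβ t β * (1 - t) / t
      = exp (β / 2) * (sinh (β * t / 2) / (β * t / 2))
          / (sinh (β * (1 - t) / 2) / (β * (1 - t) / 2)) := by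
  have := ht.1; have := sub_pos.2 ht.2
  have : sinh (β * (1 - t) / 2) ≠ 0 := (sinh_pos_iff.2 (by positivity)).ne'
  rw [rtβ_eq_sinh]
  field_simp

lemma monotoneOn_rtβ_mul_one_sub_div (hβ : 0 < β) :
    MonotoneOn (fun t => rtβ t β * (1 - t) / t) (Ioo 0 1) := by
  intro s hs t ht hst
  have := hs.1; have := ht.1; have := sub_pos.2 hs.2; have := sub_pos.2 ht.2
  simp only [rtβ_mul_one_sub_div hβ hs, rtβ_mul_one_sub_div hβ ht]
  gcongr ?_ * ?_ / ?_
  · exact monotoneOn_sinh_div_self (mem_Ioi.2 (by positivity)) (mem_Ioi.2 (by positivity))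
      (by gcongr)
  · exact monotoneOn_sinh_div_self (mem_Ioi.2 (by positivity)) (mem_Ioi.2 (by positivity))
      (by gcongr)

end rtβ

lemma concaveOn_Jint_rtβ_sub_mul_log_sub_binEntropy {β : ℝ} (hβ : 0 < β) :
    ConcaveOn ℝ (Ioo 0 1) fun t => Jint (rtβ t β) β - t * log (rtβ t β) - binEntropy t := by
  have hderiv : ∀ t ∈ Ioo (0:ℝ) 1,
      HasDerivAt (fun t => Jint (rtβ t β) β - t * log (rtβ t β) - binEntropy t)
        (-log (rtβ t β * (1 - t) / t)) t := by
    intro t ht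
    have := ht.1; have := sub_pos.2 ht.2; have := rtβ_pos hβ ht
    refine ((hasDerivAt_Jint_rtβ_sub_mul_log hβ ht).sub
      (hasDerivAt_binEntropy ht.1.ne' ht.2.ne)).congr_deriv ?_
    rw [log_div (by positivity) (by positivity), log_mul (by positivity) (by positivity)]
    ring
  refine AntitoneOn.concaveOn_of_deriv (convex_Ioo 0 1)
    (fun t ht => (hderiv t ht).continuousAt.continuousWithinAt)
    (fun t ht => (hderiv t (interior_subset ht)).differentiableAt.differentiableWithinAt) ?_
  rw [interior_Ioo]
  intro s hs t ht hst
  have := hs.1; have := sub_pos.2 hs.2; have := rtβ_pos hβ hs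
  rw [(hderiv s hs).deriv, (hderiv t ht).deriv, neg_le_neg_iff]
  exact log_le_log (by positivity) (monotoneOn_rtβ_mul_one_sub_div hβ hs ht hst)

theorem f_alpha_beta_strictConcave (α β : ℝ) (hα : -1 < α) (hβ : 0 < β) :
    StrictConcaveOn ℝ (Set.Ioo (0:ℝ) 1)
      (fun t => α * binEnt t + Jint (rtβ t β) β - t * Real.log (rtβ t β)) := by
  have hent : StrictConcaveOn ℝ (Ioo 0 1) fun t => (α + 1) * binEntropy t :=
    (strictConcave_binEntropy.subset Ioo_subset_Icc_self (convex_Ioo 0 1)).const_mul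
      (by linarith)
  refine (hent.add_concaveOn (concaveOn_Jint_rtβ_sub_mul_log_sub_binEntropy hβ)).congr
    fun t _ => ?_
  simp only [binEnt_eq_binEntropy, Pi.add_apply]
  ring
end

section
/- Let β > 0 and let x₀ denote the derivative at α = 0 of the function α ↦ (1+α)·J(1; β/(1+α)). Then the rate function I_N satisfies: (i) I_N(0) = J(1; β); (ii) I_N(x₀) = 0 and I_N(x) > 0 for every x ∈ [0, ln 2) with x ≠ x₀; (iii) I_N is strictly convex on [0, ln 2). -/
/-- The sCGF for soft-decision guesswork in the LRC:
`Λ_N(α) = (1+α)J(1; β/(1+α)) − J(1;β)` for `α > −1` and `Λ_N(α) = −J(1;β)` for `α ≤ −1`. -/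
noncomputable def ΛN (β α : ℝ) : ℝ :=
  if -1 < α then (1 + α) * Jint 1 (β / (1 + α)) - Jint 1 β else -Jint 1 β

/-- The rate function `I_N(x) = sup_{α∈ℝ} [xα − Λ_N(α)]`. -/
noncomputable def IN (β x : ℝ) : ℝ := ⨆ α : ℝ, (x * α - ΛN β α)

/-!
On `(-1, ∞)`, `Λ_N` is, up to a constant, the perspective `t ↦ t J(1; β/t)` of the convex
function `J(1; ·)` evaluated at `t = 1 + α`, hence convex; it is differentiable everywhere, at
`α = -1` because `0 ≤ Λ_N(α) - Λ_N(-1) ≤ (1 + α)² / β`. So `Λ_N` lies above its tangent line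
`α ↦ x₀ α` at `0`, which gives `I_N(x₀) = 0`, while for `x ≠ x₀` the function `α ↦ x α - Λ_N(α)`
has nonzero derivative at `0` and so exceeds its value `0` there.

For `x ∈ [0, log 2)` the supremum defining `I_N(x)` is attained: at `α = -1` when `x = 0`, and by
coercivity when `x > 0`, since `Λ_N(α) ≥ (1 + α) log 2 - β/4 - J(1; β)`. A maximiser `α` forces
`x = Λ_N'(α)`, so for `x ≠ y` it cannot maximise at both; evaluating at a maximiser for the convex
combination makes the convexity inequality of `I_N` strict.
-/

open Real Set Filter Topology MeasureTheory

/-- As a real `iSup`, this is `0` wherever `α ↦ x α - f α` is unbounded above. -/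
noncomputable def legendreTransform (f : ℝ → ℝ) (x : ℝ) : ℝ := ⨆ α, x * α - f α

section legendre

variable {f : ℝ → ℝ} {x : ℝ}

lemma le_legendreTransform (hb : BddAbove (range fun α => x * α - f α)) (α : ℝ) :
    x * α - f α ≤ legendreTransform f x :=
  le_ciSup hb α

lemma legendreTransform_eq_of_forall_le {α : ℝ} (h : ∀ γ, x * γ - f γ ≤ x * α - f α) :
    legendreTransform f x = x * α - f α :=
  le_antisymm (ciSup_le h) (le_ciSup ⟨_, forall_mem_range.2 h⟩ α)

lemma HasDerivAt.eq_of_forall_mul_sub_le {f' α : ℝ} (hf : HasDerivAt f f' α)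
    (h : ∀ γ, x * γ - f γ ≤ x * α - f α) : x = f' := by
  have hmax : IsLocalMax (fun γ => x * γ - f γ) α := Eventually.of_forall h
  have := hmax.hasDerivAt_eq_zero (((hasDerivAt_id α).const_mul x).sub hf)
  linarith

lemma HasDerivAt.lt_legendreTransform {f' a : ℝ} (hf : HasDerivAt f f' a) (hx : x ≠ f')
    (hb : BddAbove (range fun α => x * α - f α)) : x * a - f a < legendreTransform f x := by
  by_contra! h
  exact hx (hf.eq_of_forall_mul_sub_le fun γ => (le_legendreTransform hb γ).trans h)

theorem strictConvexOn_legendreTransform {s : Set ℝ} (hs : Convex ℝ s) (hf : Differentiable ℝ f)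
    (hmax : ∀ x ∈ s, ∃ α, ∀ γ, x * γ - f γ ≤ x * α - f α) :
    StrictConvexOn ℝ s (legendreTransform f) := by
  refine ⟨hs, fun x hx y hy hxy a b ha hb hab => ?_⟩
  obtain ⟨α, hα⟩ := hmax _ (hs hx hy ha.le hb.le hab)
  have hbdd : ∀ z ∈ s, BddAbove (range fun γ => z * γ - f γ) := fun z hz =>
    (hmax z hz).elim fun _ h => ⟨_, forall_mem_range.2 h⟩
  have hx' := le_legendreTransform (hbdd x hx) α
  have hy' := le_legendreTransform (hbdd y hy) α
  -- a common maximiser `α` for `x` and `y` would force `x = f' α = y`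
  have hlt : x * α - f α < legendreTransform f x ∨ y * α - f α < legendreTransform f y := by
    by_contra! h
    have hxα := (hf α).hasDerivAt.eq_of_forall_mul_sub_le
      fun γ => (le_legendreTransform (hbdd x hx) γ).trans h.1
    have hyα := (hf α).hasDerivAt.eq_of_forall_mul_sub_le
      fun γ => (le_legendreTransform (hbdd y hy) γ).trans h.2
    exact hxy (hxα.trans hyα.symm)
  rw [legendreTransform_eq_of_forall_le hα, smul_eq_mul, smul_eq_mul]
  calc (a * x + b * y) * α - f α = a * (x * α - f α) + b * (y * α - f α) := by
        linear_combination f α * hab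
    _ < a * legendreTransform f x + b * legendreTransform f y := by
        rcases hlt with h | h
        · exact add_lt_add_of_lt_of_le (mul_lt_mul_of_pos_left h ha)
            (mul_le_mul_of_nonneg_left hy' hb.le)
        · exact add_lt_add_of_le_of_lt (mul_le_mul_of_nonneg_left hx' ha.le)
            (mul_lt_mul_of_pos_left h hb)

end legendre

lemma hasDerivAt_zero_of_abs_sub_le_sq {f : ℝ → ℝ} {a C : ℝ}
    (h : ∀ y, |f y - f a| ≤ C * (y - a) ^ 2) : HasDerivAt f 0 a := by
  rw [hasDerivAt_iff_isLittleO]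
  have hO : (fun y => f y - f a) =O[𝓝 a] fun y => ‖y - a‖ ^ 2 :=
    Asymptotics.IsBigO.of_bound C (Eventually.of_forall fun y => by simpa using h y)
  simpa using hO.trans_isLittleO (Asymptotics.isLittleO_pow_sub_sub a one_lt_two)

lemma hasDerivAt_log_one_add_exp (s : ℝ) :
    HasDerivAt (fun s => log (1 + exp s)) (sigmoid s) s := by
  have h := ((hasDerivAt_exp s).const_add 1).log (by positivity)
  convert h using 1
  rw [sigmoid_def, exp_neg]
  field_simp
  ring

lemma convexOn_log_one_add_exp : ConvexOn ℝ univ fun s => log (1 + exp s) := by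
  refine Monotone.convexOn_univ_of_deriv
    (fun s => (hasDerivAt_log_one_add_exp s).differentiableAt) ?_
  rw [funext fun s => (hasDerivAt_log_one_add_exp s).deriv]
  exact sigmoid_monotone

lemma log_two_add_half_le_log_one_add_exp (s : ℝ) : log 2 + s / 2 ≤ log (1 + exp s) := by
  have hsq : exp (s / 2) ^ 2 = exp s := by rw [← exp_nat_mul]; ring_nf
  have hamgm : 2 * exp (s / 2) ≤ 1 + exp s := by nlinarith [sq_nonneg (1 - exp (s / 2))]
  calc log 2 + s / 2 = log (2 * exp (s / 2)) := by
        rw [log_mul two_ne_zero (exp_ne_zero _), log_exp]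
    _ ≤ log (1 + exp s) := log_le_log (by positivity) hamgm

lemma ConvexOn.intervalIntegral {F : ℝ → ℝ → ℝ} {s : Set ℝ} {a b : ℝ} (hab : a ≤ b)
    (hs : Convex ℝ s) (hF : ∀ x ∈ Icc a b, ConvexOn ℝ s (F · x))
    (hint : ∀ γ ∈ s, IntervalIntegrable (F γ) volume a b) :
    ConvexOn ℝ s fun γ => ∫ x in a..b, F γ x := by
  refine ⟨hs, fun γ hγ δ hδ p q hp hq hpq => ?_⟩
  simp only [smul_eq_mul]
  rw [← intervalIntegral.integral_const_mul, ← intervalIntegral.integral_const_mul,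
    ← intervalIntegral.integral_add ((hint γ hγ).const_mul p) ((hint δ hδ).const_mul q)]
  exact intervalIntegral.integral_mono_on hab (hint _ (hs hγ hδ hp hq hpq))
    (((hint γ hγ).const_mul p).add ((hint δ hδ).const_mul q))
    fun x hx => (hF x hx).2 hγ hδ hp hq hpq

lemma ConvexOn.perspective {g : ℝ → ℝ} (hg : ConvexOn ℝ univ g) (c : ℝ) :
    ConvexOn ℝ (Ioi 0) fun t => t * g (c / t) := by
  refine ⟨convex_Ioi 0, fun t (ht : 0 < t) u (hu : 0 < u) a b ha hb hab => ?_⟩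
  simp only [smul_eq_mul]
  have hT : 0 < a * t + b * u := convex_Ioi (0:ℝ) ht hu ha hb hab
  have hcomb := hg.2 (mem_univ (c / t)) (mem_univ (c / u))
    (div_nonneg (mul_nonneg ha ht.le) hT.le) (div_nonneg (mul_nonneg hb hu.le) hT.le)
    (by field_simp)
  simp only [smul_eq_mul] at hcomb
  have harg : a * t / (a * t + b * u) * (c / t) + b * u / (a * t + b * u) * (c / u)
      = c / (a * t + b * u) := by field_simp; linear_combination c * hab
  rw [harg] at hcomb
  calc (a * t + b * u) * g (c / (a * t + b * u))
      ≤ (a * t + b * u) * (a * t / (a * t + b * u) * g (c / t)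
          + b * u / (a * t + b * u) * g (c / u)) := mul_le_mul_of_nonneg_left hcomb hT.le
    _ = a * (t * g (c / t)) + b * (u * g (c / u)) := by field_simp

lemma Jint_one (γ : ℝ) : Jint 1 γ = ∫ x in (0:ℝ)..1, log (1 + exp (-γ * x)) := by
  simp [Jint]

lemma continuous_log_one_add_exp_mul (γ : ℝ) :
    Continuous fun x => log (1 + exp (-γ * x)) :=
  by fun_prop (disch := intro; positivity)

lemma Jint_one_nonneg (γ : ℝ) : 0 ≤ Jint 1 γ :=
  intervalIntegral.integral_nonneg zero_le_one fun x _ => log_nonneg (by simp [(exp_pos _).le])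

lemma convexOn_Jint_one : ConvexOn ℝ univ (Jint 1) := by
  rw [funext Jint_one]
  refine ConvexOn.intervalIntegral zero_le_one convex_univ (fun x _ => ?_)
    fun γ _ => (continuous_log_one_add_exp_mul γ).intervalIntegrable _ _
  have h := convexOn_log_one_add_exp.comp_linearMap (LinearMap.mulLeft ℝ (-x))
  simp only [preimage_univ] at h
  refine h.congr fun γ _ => ?_
  simp [mul_comm]

lemma log_two_sub_div_four_le_Jint_one (γ : ℝ) : log 2 - γ / 4 ≤ Jint 1 γ := by
  have hlin : ∫ x in (0:ℝ)..1, (log 2 + -γ * x / 2) = log 2 - γ / 4 := by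
    rw [intervalIntegral.integral_add intervalIntegrable_const
      (Continuous.intervalIntegrable (by fun_prop) _ _),
      intervalIntegral.integral_div, intervalIntegral.integral_const_mul]
    norm_num
    ring
  rw [← hlin, Jint_one]
  exact intervalIntegral.integral_mono_on zero_le_one
    (Continuous.intervalIntegrable (by fun_prop) _ _)
    ((continuous_log_one_add_exp_mul γ).intervalIntegrable _ _)
    fun x _ => log_two_add_half_le_log_one_add_exp _

lemma Jint_one_eq_inv_mul_integral {γ : ℝ} (hγ : γ ≠ 0) :
    Jint 1 γ = γ⁻¹ * ∫ u in (0:ℝ)..γ, log (1 + exp (-u)) := by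
  simp only [Jint_one, neg_mul]
  rw [intervalIntegral.integral_comp_mul_left (fun u => log (1 + exp (-u))) hγ]
  simp

lemma differentiableAt_Jint_one {γ : ℝ} (hγ : γ ≠ 0) : DifferentiableAt ℝ (Jint 1) γ := by
  have hG : Continuous fun u => log (1 + exp (-u)) := by
    simpa using continuous_log_one_add_exp_mul 1
  have heq : (fun δ => δ⁻¹ * ∫ u in (0:ℝ)..δ, log (1 + exp (-u))) =ᶠ[𝓝 γ] Jint 1 :=
    Filter.mem_of_superset (isOpen_ne.mem_nhds hγ) fun δ hδ =>
      (Jint_one_eq_inv_mul_integral hδ).symm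
  exact ((differentiableAt_inv hγ).mul
    (hG.integral_hasStrictDerivAt 0 γ).hasDerivAt.differentiableAt).congr_of_eventuallyEq heq.symm

lemma Jint_one_le_inv {γ : ℝ} (hγ : 0 < γ) : Jint 1 γ ≤ γ⁻¹ := by
  have hexp : ∫ u in (0:ℝ)..γ, exp (-u) = 1 - exp (-γ) := by
    simp [intervalIntegral.integral_comp_neg]
  have hG : ∫ u in (0:ℝ)..γ, log (1 + exp (-u)) ≤ 1 := by
    calc ∫ u in (0:ℝ)..γ, log (1 + exp (-u)) ≤ ∫ u in (0:ℝ)..γ, exp (-u) :=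
          intervalIntegral.integral_mono_on hγ.le
            (by simpa using (continuous_log_one_add_exp_mul 1).intervalIntegrable 0 γ)
            (Continuous.intervalIntegrable (by fun_prop) _ _) fun u _ => by
              linarith [log_le_sub_one_of_pos (by positivity : 0 < 1 + exp (-u))]
      _ ≤ 1 := by rw [hexp]; linarith [exp_pos (-γ)]
  rw [Jint_one_eq_inv_mul_integral hγ.ne']
  exact mul_le_of_le_one_right (inv_nonneg.2 hγ.le) hG

section ΛN

variable {β α : ℝ}

lemma ΛN_of_neg_one_lt (h : -1 < α) :
    ΛN β α = (1 + α) * Jint 1 (β / (1 + α)) - Jint 1 β :=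
  if_pos h

lemma ΛN_of_le_neg_one (h : α ≤ -1) : ΛN β α = -Jint 1 β :=
  if_neg h.not_gt

lemma ΛN_zero : ΛN β 0 = 0 := by
  simp [ΛN_of_neg_one_lt]

lemma ΛN_neg_one_le (α : ℝ) : ΛN β (-1) ≤ ΛN β α := by
  rw [ΛN_of_le_neg_one le_rfl]
  rcases le_or_gt α (-1) with h | h
  · rw [ΛN_of_le_neg_one h]
  · rw [ΛN_of_neg_one_lt h]
    linarith [mul_nonneg (by linarith : (0:ℝ) ≤ 1 + α) (Jint_one_nonneg (β / (1 + α)))]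

lemma abs_ΛN_sub_ΛN_neg_one_le (hβ : 0 < β) (α : ℝ) :
    |ΛN β α - ΛN β (-1)| ≤ β⁻¹ * (α - -1) ^ 2 := by
  rw [ΛN_of_le_neg_one le_rfl]
  rcases le_or_gt α (-1) with h | h
  · rw [ΛN_of_le_neg_one h, sub_self, abs_zero]
    positivity
  · have ht : 0 < 1 + α := by linarith
    have hJ := Jint_one_le_inv (div_pos hβ ht)
    rw [ΛN_of_neg_one_lt h, sub_neg_eq_add, sub_add_cancel,
      abs_of_nonneg (mul_nonneg ht.le (Jint_one_nonneg _))]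
    calc (1 + α) * Jint 1 (β / (1 + α)) ≤ (1 + α) * (β / (1 + α))⁻¹ :=
          mul_le_mul_of_nonneg_left hJ ht.le
      _ = β⁻¹ * (α - -1) ^ 2 := by field_simp; ring

lemma hasDerivAt_ΛN_neg_one (hβ : 0 < β) : HasDerivAt (ΛN β) 0 (-1) :=
  hasDerivAt_zero_of_abs_sub_le_sq (abs_ΛN_sub_ΛN_neg_one_le hβ)

lemma differentiableAt_mul_Jint_one_div (hβ : β ≠ 0) (hα : -1 < α) :
    DifferentiableAt ℝ (fun α => (1 + α) * Jint 1 (β / (1 + α))) α := by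
  have ht : 1 + α ≠ 0 := by linarith
  have hγ : DifferentiableAt ℝ (fun α => β / (1 + α)) α := by fun_prop (disch := exact ht)
  exact (differentiableAt_id.const_add 1).mul
    ((differentiableAt_Jint_one (div_ne_zero hβ ht)).comp (g := Jint 1) α hγ)

lemma ΛN_eventuallyEq (hα : -1 < α) :
    ΛN β =ᶠ[𝓝 α] fun α => (1 + α) * Jint 1 (β / (1 + α)) - Jint 1 β :=
  Filter.mem_of_superset (Ioi_mem_nhds hα) fun _ h => ΛN_of_neg_one_lt h

lemma differentiable_ΛN (hβ : 0 < β) : Differentiable ℝ (ΛN β) := by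
  intro α
  rcases lt_trichotomy α (-1) with h | rfl | h
  · exact (differentiableAt_const _).congr_of_eventuallyEq
      (Filter.mem_of_superset (Iio_mem_nhds h) fun _ h => ΛN_of_le_neg_one (le_of_lt h))
  · exact (hasDerivAt_ΛN_neg_one hβ).differentiableAt
  · exact ((differentiableAt_mul_Jint_one_div hβ.ne' h).sub_const _).congr_of_eventuallyEq
      (ΛN_eventuallyEq h)

lemma hasDerivAt_ΛN_zero (hβ : β ≠ 0) :
    HasDerivAt (ΛN β) (deriv (fun α => (1 + α) * Jint 1 (β / (1 + α))) 0) 0 :=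
  ((differentiableAt_mul_Jint_one_div hβ (by norm_num)).hasDerivAt.sub_const _)
    |>.congr_of_eventuallyEq (ΛN_eventuallyEq (by norm_num))

lemma convexOn_ΛN : ConvexOn ℝ (Ioi (-1)) (ΛN β) := by
  have h := (convexOn_Jint_one.perspective β).translate_right 1
  have hpre : (fun α : ℝ => 1 + α) ⁻¹' Ioi 0 = Ioi (-1) := by
    ext α; simp only [mem_preimage, mem_Ioi]; constructor <;> intro <;> linarith
  rw [hpre] at h
  exact (h.add_const (-Jint 1 β)).congr fun α hα => by
    simp [ΛN_of_neg_one_lt (mem_Ioi.1 hα), sub_eq_add_neg]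

lemma deriv_mul_le_ΛN (hβ : 0 < β) (α : ℝ) :
    deriv (fun α => (1 + α) * Jint 1 (β / (1 + α))) 0 * α ≤ ΛN β α := by
  set x₀ := deriv (fun α => (1 + α) * Jint 1 (β / (1 + α))) 0
  have hmin : IsMinOn (fun α => ΛN β α - x₀ * α) (Ioi (-1)) 0 := by
    refine (convexOn_ΛN.sub ((LinearMap.mulLeft ℝ x₀).concaveOn (convex_Ioi _)))
      |>.isMinOn_of_rightDeriv_eq_zero (by simp) ?_
    have hd := (hasDerivAt_ΛN_zero hβ.ne').sub ((hasDerivAt_id (0:ℝ)).const_mul x₀)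
    exact (hd.hasDerivWithinAt.derivWithin (uniqueDiffWithinAt_Ioi 0)).trans (by simp [x₀])
  have hIoi : ∀ α ∈ Ioi (-1), x₀ * α ≤ ΛN β α := fun α hα => by
    have := isMinOn_iff.1 hmin α hα
    rw [ΛN_zero] at this
    linarith
  have hIci : ∀ α ∈ Ici (-1), x₀ * α ≤ ΛN β α := fun α hα =>
    le_on_closure hIoi (by fun_prop : Continuous fun α => x₀ * α).continuousOn
      (differentiable_ΛN hβ).continuous.continuousOn (by rwa [closure_Ioi])
  rcases le_or_gt α (-1) with h | h
  · -- at `α = -1` the tangent inequality reads `Jint 1 β ≤ x₀`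
    have h₁ := hIci (-1) (mem_Ici.2 le_rfl)
    rw [ΛN_of_le_neg_one le_rfl] at h₁
    rw [ΛN_of_le_neg_one h]
    nlinarith [Jint_one_nonneg β]
  · exact hIoi α h

lemma tendsto_ΛN_sub_mul_cocompact {z : ℝ} (hz₀ : 0 < z) (hz : z < log 2) :
    Tendsto (fun α => ΛN β α - z * α) (cocompact ℝ) atTop := by
  rw [cocompact_eq_atBot_atTop, tendsto_sup]
  constructor
  · refine (tendsto_atTop_add_const_left _ (-Jint 1 β)
      (tendsto_neg_atBot_atTop.const_mul_atTop hz₀)).congr'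
      (Filter.mem_of_superset (Iic_mem_atBot (-1)) fun α h => ?_)
    simp only [mem_ofPred_eq, ΛN_of_le_neg_one (mem_Iic.1 h)]
    ring
  · refine tendsto_atTop_mono' _
      (Filter.mem_of_superset (Ioi_mem_atTop 0) fun α (h : 0 < α) => ?_)
      (tendsto_atTop_add_const_left _ (log 2 - β / 4 - Jint 1 β)
        (tendsto_id.const_mul_atTop (sub_pos.2 hz)))
    have ht : 0 < 1 + α := by linarith
    have hJ := mul_le_mul_of_nonneg_left (log_two_sub_div_four_le_Jint_one (β / (1 + α))) ht.le
    have : (1 + α) * (log 2 - β / (1 + α) / 4) = (1 + α) * log 2 - β / 4 := by field_simp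
    simp only [mem_ofPred_eq, id, ΛN_of_neg_one_lt (by linarith : -1 < α)]
    linarith

lemma exists_forall_mul_sub_ΛN_le (hβ : 0 < β) {z : ℝ} (hz : z ∈ Ico 0 (log 2)) :
    ∃ α, ∀ γ, z * γ - ΛN β γ ≤ z * α - ΛN β α := by
  rcases hz.1.eq_or_lt with rfl | hz₀
  · exact ⟨-1, fun γ => by simpa using ΛN_neg_one_le γ⟩
  · have hcont : Continuous fun α => ΛN β α - z * α :=
      (differentiable_ΛN hβ).continuous.sub (continuous_const_mul z)
    obtain ⟨α, hα⟩ := hcont.exists_forall_le (tendsto_ΛN_sub_mul_cocompact hz₀ hz.2)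
    exact ⟨α, fun γ => by linarith [hα γ]⟩

end ΛN

theorem soft_rate_function_properties (β : ℝ) (hβ : 0 < β)
    (x₀ : ℝ) (hx₀ : x₀ = deriv (fun α : ℝ => (1 + α) * Jint 1 (β / (1 + α))) 0) :
    IN β 0 = Jint 1 β ∧
    (IN β x₀ = 0 ∧ ∀ x ∈ Set.Ico (0:ℝ) (Real.log 2), x ≠ x₀ → 0 < IN β x) ∧
    StrictConvexOn ℝ (Set.Ico (0:ℝ) (Real.log 2)) (IN β) := by
  subst hx₀
  have hmax := fun z (hz : z ∈ Ico 0 (log 2)) => exists_forall_mul_sub_ΛN_le hβ hz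
  rw [show IN β = legendreTransform (ΛN β) from rfl]
  refine ⟨?_, ⟨?_, fun x hx hne => ?_⟩, ?_⟩
  · rw [legendreTransform_eq_of_forall_le (α := -1) fun γ => by simpa using ΛN_neg_one_le γ]
    simp [ΛN_of_le_neg_one le_rfl]
  · rw [legendreTransform_eq_of_forall_le (α := 0) fun γ => by
      simpa [ΛN_zero] using deriv_mul_le_ΛN hβ γ]
    simp [ΛN_zero]
  · obtain ⟨α, hα⟩ := hmax x hx
    simpa [ΛN_zero] using (hasDerivAt_ΛN_zero hβ.ne').lt_legendreTransform hne
      ⟨_, forall_mem_range.2 hα⟩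
  · exact strictConvexOn_legendreTransform (convex_Ico _ _) (differentiable_ΛN hβ) hmax
end

section
/- For all real z > 1: ((z² − 1)/ln z)·ln((1+z)/2) − (3z² − 2z − 1)/4 > 0. -/
/-!
Since `z ^ 2 - 1 = (z - 1) (z + 1)` and `3 z ^ 2 - 2 z - 1 = (z - 1) (3 z + 1)`, the claim is
`(3 z + 1) log z < 4 (z + 1) log ((1 + z) / 2)`. Both sides agree at `z = 1`, and the derivative of
their difference is `4 log ((1 + z) / 2) + 1 - 3 log z - 1 / z`, which again vanishes at `z = 1`
and has derivative `(z - 1) ^ 2 / (z ^ 2 (1 + z)) > 0`. Two applications of the mean value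
theorem finish the proof.
-/

open Real Set

lemma lt_of_hasDerivAt_pos {f f' : ℝ → ℝ} {a b : ℝ} (hab : a < b)
    (hf : ∀ x ∈ Icc a b, HasDerivAt f (f' x) x) (hf' : ∀ x ∈ Ioo a b, 0 < f' x) :
    f a < f b := by
  obtain ⟨c, hc, hslope⟩ := exists_hasDerivAt_eq_slope f f' hab
    (fun x hx => (hf x hx).continuousAt.continuousWithinAt)
    (fun x hx => hf x (Ioo_subset_Icc_self hx))
  have := hf' c hc
  rwa [hslope, div_pos_iff_of_pos_right (sub_pos.mpr hab), sub_pos] at this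

lemma hasDerivAt_log_one_add_div_two {x : ℝ} (hx : 1 + x ≠ 0) :
    HasDerivAt (fun y => log ((1 + y) / 2)) (1 / (1 + x)) x := by
  have h := (((hasDerivAt_id' x).const_add 1).div_const 2).log (by simpa using hx)
  convert h using 1
  field_simp

lemma three_mul_log_add_inv_lt {x : ℝ} (hx : 1 < x) :
    3 * log x + x⁻¹ < 4 * log ((1 + x) / 2) + 1 := by
  have hderiv : ∀ y ∈ Icc 1 x, HasDerivAt (fun y => 4 * log ((1 + y) / 2) + 1 - 3 * log y - y⁻¹)
      ((y - 1) ^ 2 / (y ^ 2 * (1 + y))) y := by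
    intro y ⟨hy, _⟩
    have hy0 : 0 < y := by linarith
    have h := ((((hasDerivAt_log_one_add_div_two (x := y) (by linarith)).const_mul 4).add_const
      1).sub ((hasDerivAt_log hy0.ne').const_mul 3)).sub (hasDerivAt_inv hy0.ne')
    refine h.congr_deriv ?_
    field_simp
    ring
  have hpos : ∀ y ∈ Ioo 1 x, 0 < (y - 1) ^ 2 / (y ^ 2 * (1 + y)) := by
    intro y ⟨hy, _⟩
    have : 0 < y - 1 := by linarith
    positivity
  have := lt_of_hasDerivAt_pos hx hderiv hpos
  norm_num at this
  linarith

lemma three_mul_add_one_mul_log_lt {x : ℝ} (hx : 1 < x) :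
    (3 * x + 1) * log x < 4 * (x + 1) * log ((1 + x) / 2) := by
  have hderiv : ∀ y ∈ Icc 1 x,
      HasDerivAt (fun y => 4 * (y + 1) * log ((1 + y) / 2) - (3 * y + 1) * log y)
        (4 * log ((1 + y) / 2) + 1 - (3 * log y + y⁻¹)) y := by
    intro y ⟨hy, _⟩
    have hy0 : 0 < y := by linarith
    have h := ((((hasDerivAt_id' y).add_const 1).const_mul 4).mul
      (hasDerivAt_log_one_add_div_two (x := y) (by linarith))).sub
      ((((hasDerivAt_id' y).const_mul 3).add_const 1).mul (hasDerivAt_log hy0.ne'))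
    refine h.congr_deriv ?_
    field_simp
    ring
  have hpos : ∀ y ∈ Ioo 1 x, 0 < 4 * log ((1 + y) / 2) + 1 - (3 * log y + y⁻¹) :=
    fun y hy => sub_pos.mpr (three_mul_log_add_inv_lt hy.1)
  have := lt_of_hasDerivAt_pos hx hderiv hpos
  norm_num at this
  linarith

theorem elementary_log_inequality (z : ℝ) (hz : 1 < z) :
    ((z ^ 2 - 1) / Real.log z) * Real.log ((1 + z) / 2)
      - (3 * z ^ 2 - 2 * z - 1) / 4 > 0 := by
  have hlog : 0 < log z := log_pos hz
  have hfactor : ((z ^ 2 - 1) / log z) * log ((1 + z) / 2) - (3 * z ^ 2 - 2 * z - 1) / 4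
      = (z - 1) / (4 * log z) * (4 * (z + 1) * log ((1 + z) / 2) - (3 * z + 1) * log z) := by
    field_simp
    ring
  rw [gt_iff_lt, hfactor]
  have := sub_pos.mpr (three_mul_add_one_mul_log_lt hz)
  have : 0 < z - 1 := sub_pos.mpr hz
  positivity
end

section
/- Let β > 0 and let (j_n) and (k_n) be sequences of integers with 0 ≤ j_n, k_n ≤ n for each n and |j_n − k_n| = O(√n) as n → ∞. Then lim_{n→∞} (1/n)·|ln a^n_{j_n}(β) − ln a^n_{k_n}(β)| = 0. -/
/-!
The variables `x_i = e^{-βi/n}` lie in `[e^{-|β|}, e^{|β|}]`. Counting pairs `(S, i)` with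
`#S = m`, `i ∉ S` gives `(m+1) e_{m+1} = ∑_{#S=m} x_S ∑_{i∉S} x_i`, so the ratio
`a^n_{m+1}/a^n_m` lies between `e^{-|β|}/n` and `n e^{|β|}`. Hence `k ↦ log a^n_k` is
`(log n + |β|)`-Lipschitz on `[0, n]`, and `|j_n - k_n| = O(√n)` bounds
`(1/n)|log a^n_{j_n} - log a^n_{k_n}|` by `O((log n + |β|)/√n) → 0`.
-/

/-- `a^n_k(β)`: the degree-`k` elementary symmetric polynomial in the `n` variables
`e^{-βi/n}`, `i = 1,…,n`. -/
noncomputable def ank (β : ℝ) (n k : ℕ) : ℝ :=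
  ∑ s ∈ Finset.powersetCard k (Finset.Icc 1 n), ∏ i ∈ s, Real.exp (-β * (i : ℝ) / n)

open Finset Asymptotics Real

section ElementarySymmetric

variable {ι R : Type*} [DecidableEq ι]

/-- Double counting of the pairs `(T, i)` with `i ∈ T`, `#T = m + 1`, through `S = T \ {i}`. -/
theorem succ_mul_sum_powersetCard_succ_prod [CommSemiring R] (x : ι → R) (U : Finset ι) (m : ℕ) :
    (m + 1 : R) * ∑ T ∈ U.powersetCard (m + 1), ∏ j ∈ T, x j
      = ∑ S ∈ U.powersetCard m, ∑ i ∈ U \ S, x i * ∏ j ∈ S, x j := by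
  have hcount : ∀ T ∈ U.powersetCard (m + 1),
      (m + 1 : R) * ∏ j ∈ T, x j = ∑ i ∈ T, x i * ∏ j ∈ T.erase i, x j := by
    intro T hT
    rw [sum_congr rfl fun i hi => mul_prod_erase T x hi, sum_const, (mem_powersetCard.1 hT).2,
      nsmul_eq_mul]
    push_cast
    ring
  rw [mul_sum, sum_congr rfl hcount, sum_sigma', sum_sigma']
  refine sum_nbij' (fun p => ⟨p.1.erase p.2, p.2⟩) (fun p => ⟨insert p.2 p.1, p.2⟩)
    ?_ ?_ ?_ ?_ fun _ _ => rfl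
  · rintro ⟨T, i⟩ hp
    simp only [mem_sigma, mem_powersetCard] at hp ⊢
    obtain ⟨⟨hTU, hTc⟩, hiT⟩ := hp
    refine ⟨⟨(erase_subset _ _).trans hTU, by rw [card_erase_of_mem hiT, hTc]; rfl⟩, ?_⟩
    simp [hTU hiT]
  · rintro ⟨S, i⟩ hp
    simp only [mem_sigma, mem_powersetCard, mem_sdiff] at hp ⊢
    obtain ⟨⟨hSU, hSc⟩, hiU, hiS⟩ := hp
    exact ⟨⟨insert_subset hiU hSU, by rw [card_insert_of_notMem hiS, hSc]⟩, mem_insert_self _ _⟩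
  · rintro ⟨T, i⟩ hp
    simp only [mem_sigma] at hp
    simp [insert_erase hp.2]
  · rintro ⟨S, i⟩ hp
    simp only [mem_sigma, mem_sdiff] at hp
    simp [erase_insert hp.2.2]

theorem card_sdiff_of_mem_powersetCard {U S : Finset ι} {m : ℕ} (hS : S ∈ U.powersetCard m) :
    #(U \ S) = #U - m := by
  rw [mem_powersetCard] at hS
  rw [card_sdiff_of_subset hS.1, hS.2]

variable [CommSemiring R] [PartialOrder R] [IsOrderedRing R] {x : ι → R} {U : Finset ι} {a b : R}

theorem succ_mul_sum_powersetCard_succ_prod_le (hx : ∀ i ∈ U, 0 ≤ x i ∧ x i ≤ b) (m : ℕ) :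
    (m + 1 : R) * ∑ T ∈ U.powersetCard (m + 1), ∏ j ∈ T, x j
      ≤ (#U - m : ℕ) * b * ∑ S ∈ U.powersetCard m, ∏ j ∈ S, x j := by
  rw [succ_mul_sum_powersetCard_succ_prod, mul_sum]
  refine sum_le_sum fun S hS => ?_
  have hprod : 0 ≤ ∏ j ∈ S, x j :=
    prod_nonneg fun j hj => (hx j ((mem_powersetCard.1 hS).1 hj)).1
  calc ∑ i ∈ U \ S, x i * ∏ j ∈ S, x j ≤ #(U \ S) • (b * ∏ j ∈ S, x j) :=
        sum_le_card_nsmul _ _ _ fun i hi =>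
          mul_le_mul_of_nonneg_right (hx i (mem_sdiff.1 hi).1).2 hprod
    _ = (#U - m : ℕ) * b * ∏ j ∈ S, x j := by
        rw [card_sdiff_of_mem_powersetCard hS, nsmul_eq_mul, mul_assoc]

theorem le_succ_mul_sum_powersetCard_succ_prod (ha : 0 ≤ a) (hx : ∀ i ∈ U, a ≤ x i) (m : ℕ) :
    (#U - m : ℕ) * a * ∑ S ∈ U.powersetCard m, ∏ j ∈ S, x j
      ≤ (m + 1 : R) * ∑ T ∈ U.powersetCard (m + 1), ∏ j ∈ T, x j := by
  rw [succ_mul_sum_powersetCard_succ_prod, mul_sum]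
  refine sum_le_sum fun S hS => ?_
  have hprod : 0 ≤ ∏ j ∈ S, x j :=
    prod_nonneg fun j hj => ha.trans (hx j ((mem_powersetCard.1 hS).1 hj))
  calc (#U - m : ℕ) * a * ∏ j ∈ S, x j = #(U \ S) • (a * ∏ j ∈ S, x j) := by
        rw [card_sdiff_of_mem_powersetCard hS, nsmul_eq_mul, mul_assoc]
    _ ≤ ∑ i ∈ U \ S, x i * ∏ j ∈ S, x j :=
        card_nsmul_le_sum _ _ _ fun i hi =>
          mul_le_mul_of_nonneg_right (hx i (mem_sdiff.1 hi).1) hprod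

end ElementarySymmetric

theorem abs_log_sub_log_le {A B L : ℝ} (hA : 0 < A) (hlow : exp (-L) * A ≤ B)
    (hup : B ≤ exp L * A) : |log B - log A| ≤ L := by
  have hB : 0 < B := lt_of_lt_of_le (by positivity) hlow
  rw [abs_le]
  constructor
  · have := log_le_log (by positivity) hlow
    rw [log_mul (exp_ne_zero _) hA.ne', log_exp] at this
    linarith
  · have := log_le_log hB hup
    rw [log_mul (exp_ne_zero _) hA.ne', log_exp] at this
    linarith

theorem abs_sub_le_of_abs_sub_succ_le {u : ℕ → ℝ} {n : ℕ} {L : ℝ}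
    (hu : ∀ m < n, |u (m + 1) - u m| ≤ L) {a b : ℕ} (ha : a ≤ n) (hb : b ≤ n) :
    |u a - u b| ≤ |(a : ℝ) - b| * L := by
  wlog hab : b ≤ a generalizing a b
  · rw [abs_sub_comm, abs_sub_comm (a : ℝ)]
    exact this hb ha (by omega)
  have := dist_le_Ico_sum_of_dist_le (f := u) (d := fun _ => L) hab fun _ hma =>
    by rw [dist_comm]; exact hu _ (by omega)
  rw [sum_const, Nat.card_Ico, nsmul_eq_mul, Nat.cast_sub hab] at this
  rwa [abs_sub_comm, abs_of_nonneg (sub_nonneg.2 (Nat.cast_le.2 hab))]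

theorem exp_neg_abs_le_exp_mul_div {β : ℝ} {n i : ℕ} (hi : i ∈ Icc 1 n) :
    exp (-|β|) ≤ exp (-β * i / n) ∧ exp (-β * i / n) ≤ exp |β| := by
  have hfrac : |(i : ℝ) / n| ≤ 1 := by
    rw [abs_div, Nat.abs_cast, Nat.abs_cast]
    exact div_le_one_of_le₀ (by exact_mod_cast (mem_Icc.1 hi).2) (Nat.cast_nonneg n)
  have hexp : |-β * i / n| ≤ |β| := by
    rw [mul_div_assoc, abs_mul, abs_neg]
    exact mul_le_of_le_one_right (abs_nonneg β) hfrac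
  exact ⟨exp_le_exp.2 (neg_le_of_abs_le hexp), exp_le_exp.2 (le_of_abs_le hexp)⟩

theorem ank_pos (β : ℝ) {n k : ℕ} (hk : k ≤ n) : 0 < ank β n k := by
  refine sum_pos (fun s _ => prod_pos fun i _ => exp_pos _) ?_
  rwa [powersetCard_nonempty, Nat.card_Icc, Nat.add_sub_cancel]

theorem ank_succ_le (β : ℝ) {n m : ℕ} (hm : m < n) :
    ank β n (m + 1) ≤ exp (log n + |β|) * ank β n m := by
  have h : (m + 1 : ℝ) * ank β n (m + 1) ≤ (n - m : ℕ) * exp |β| * ank β n m := by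
    have := succ_mul_sum_powersetCard_succ_prod_le (U := Icc 1 n) (b := exp |β|)
      (fun i hi => ⟨(exp_pos _).le, (exp_neg_abs_le_exp_mul_div hi).2⟩) m
    rwa [Nat.card_Icc, Nat.add_sub_cancel] at this
  have hn : (0 : ℝ) < n := Nat.cast_pos.2 (by omega)
  rw [exp_add, exp_log hn]
  calc ank β n (m + 1) ≤ (m + 1) * ank β n (m + 1) :=
        le_mul_of_one_le_left (ank_pos β hm).le (by simp)
    _ ≤ (n - m : ℕ) * exp |β| * ank β n m := h
    _ ≤ n * exp |β| * ank β n m := by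
        gcongr
        · exact (ank_pos β hm.le).le
        · exact_mod_cast n.sub_le m

theorem exp_neg_mul_ank_le_ank_succ (β : ℝ) {n m : ℕ} (hm : m < n) :
    exp (-(log n + |β|)) * ank β n m ≤ ank β n (m + 1) := by
  have h : (n - m : ℕ) * exp (-|β|) * ank β n m ≤ (m + 1 : ℝ) * ank β n (m + 1) := by
    have := le_succ_mul_sum_powersetCard_succ_prod (U := Icc 1 n) (exp_pos (-|β|)).le
      (fun i hi => (exp_neg_abs_le_exp_mul_div hi).1) m
    rwa [Nat.card_Icc, Nat.add_sub_cancel] at this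
  have hn : (0 : ℝ) < n := Nat.cast_pos.2 (by omega)
  rw [neg_add, exp_add, exp_neg, exp_log hn, mul_assoc, inv_mul_le_iff₀ hn]
  calc exp (-|β|) * ank β n m ≤ (n - m : ℕ) * exp (-|β|) * ank β n m := by
        rw [mul_assoc]
        refine le_mul_of_one_le_left (mul_pos (exp_pos _) (ank_pos β hm.le)).le ?_
        exact_mod_cast Nat.one_le_iff_ne_zero.2 (Nat.sub_ne_zero_of_lt hm)
    _ ≤ (m + 1 : ℝ) * ank β n (m + 1) := h
    _ ≤ n * ank β n (m + 1) := by
        gcongr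
        · exact (ank_pos β hm).le
        · exact_mod_cast hm

theorem abs_log_ank_succ_sub_le (β : ℝ) {n m : ℕ} (hm : m < n) :
    |log (ank β n (m + 1)) - log (ank β n m)| ≤ log n + |β| :=
  abs_log_sub_log_le (ank_pos β hm.le) (exp_neg_mul_ank_le_ank_succ β hm) (ank_succ_le β hm)

theorem abs_log_ank_sub_le (β : ℝ) {n a b : ℕ} (ha : a ≤ n) (hb : b ≤ n) :
    |log (ank β n a) - log (ank β n b)| ≤ |(a : ℝ) - b| * (log n + |β|) :=
  abs_sub_le_of_abs_sub_succ_le (u := fun k => log (ank β n k))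
    (fun _ hm => abs_log_ank_succ_sub_le β hm) ha hb

open Filter Topology in
theorem tendsto_sqrt_mul_log_add_div_atTop (c : ℝ) :
    Tendsto (fun x : ℝ => √x * ((log x + c) / x)) atTop (𝓝 0) := by
  have hsqrt : Tendsto (fun x : ℝ => x ^ (1 / 2 : ℝ)) atTop atTop :=
    tendsto_rpow_atTop (by norm_num)
  have hlog : (fun x => log x + c) =o[atTop] fun x => x ^ (1 / 2 : ℝ) :=
    (isLittleO_log_rpow_atTop (by norm_num)).add
      (isLittleO_const_left.2 (Or.inr (tendsto_norm_atTop_atTop.comp hsqrt)))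
  refine hlog.tendsto_div_nhds_zero.congr fun x => ?_
  rw [← sqrt_eq_rpow, mul_div_left_comm, sqrt_div_self', mul_one_div]

theorem ank_close_indices_general (β : ℝ) (j k : ℕ → ℕ)
    (hj : ∀ n, j n ≤ n) (hk : ∀ n, k n ≤ n)
    (hO : (fun n : ℕ => ((j n : ℝ) - (k n : ℝ))) =O[Filter.atTop]
      (fun n : ℕ => Real.sqrt n)) :
    Filter.Tendsto
      (fun n : ℕ => (1 / (n : ℝ)) * |Real.log (ank β n (j n)) - Real.log (ank β n (k n))|)
      Filter.atTop (nhds 0) := by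
  have hbound : (fun n : ℕ => (1 / (n : ℝ)) * |log (ank β n (j n)) - log (ank β n (k n))|)
      =O[Filter.atTop] fun n : ℕ => ((j n : ℝ) - k n) * ((log n + |β|) / n) := by
    refine isBigO_of_le _ fun n => ?_
    rw [norm_of_nonneg (by positivity), Real.norm_eq_abs, abs_mul,
      abs_of_nonneg (by positivity : 0 ≤ (log n + |β|) / n), one_div_mul_eq_div, mul_div_assoc']
    gcongr
    exact abs_log_ank_sub_le β (hj n) (hk n)
  exact (hbound.trans (hO.mul (isBigO_refl _ _))).trans_tendsto
    ((tendsto_sqrt_mul_log_add_div_atTop |β|).comp tendsto_natCast_atTop_atTop)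

theorem ank_close_indices (β : ℝ) (hβ : 0 < β) (j k : ℕ → ℕ)
    (hj : ∀ n, j n ≤ n) (hk : ∀ n, k n ≤ n)
    (hO : (fun n : ℕ => ((j n : ℝ) - (k n : ℝ))) =O[Filter.atTop]
      (fun n : ℕ => Real.sqrt n)) :
    Filter.Tendsto
      (fun n : ℕ => (1 / (n : ℝ)) * |Real.log (ank β n (j n)) - Real.log (ank β n (k n))|)
      Filter.atTop (nhds 0) :=
  ank_close_indices_general β j k hj hk hO
end

section
/- Let β > 0 and r > 0. For each n ≥ 1, let κ_n be any maximizer over k ∈ {0,1,…,n} of k ↦ a^n_k(β)·r^k. Then lim_{n→∞} κ_n/n = (1/β)·ln((1+r)/(1+r e^{−β})). -/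
/-!
Since `∑ k, ank β n k * y ^ k = ∏_{i=1}^n (1 + y e^{-βi/n})`, the normalised weights
`ank β n k * r ^ k` are the law of a sum of independent Bernoulli(`p_i`) variables, where
`p_i = q_i / (1 + q_i)` and `q_i = r e^{-βi/n}`. A largest of the `n + 1` weights carries at least
a `1 / (n + 1)` share of the mass, so the Chernoff bound gives
`κ_n s ≤ log (n + 1) + ∑_i log (1 - p_i + p_i e^s)` for every real `s`. Together with
`s p ≤ log (1 - p + p e^s) ≤ s p + s (e^s - 1)` this pins `κ_n / n` to the mean density
`∑_i p_i / n` up to `O(s) + O(log n / (n s))`. At `s = β / n` the Bernoulli factors telescope,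
`∏_i (1 + q_i e^{β/n}) / (1 + q_i) = (1 + r) / (1 + r e^{-β})`, which pins the mean density to
`(1 / β) log ((1 + r) / (1 + r e^{-β}))` up to `e^{β/n} - 1`.
-/

open Finset Filter Real Topology

lemma ank_nonneg (β : ℝ) (n k : ℕ) : 0 ≤ ank β n k :=
  sum_nonneg fun _ _ => prod_nonneg fun _ _ => (exp_pos _).le

lemma sum_ank_mul_pow (β : ℝ) (n : ℕ) (y : ℝ) :
    ∑ k ∈ range (n + 1), ank β n k * y ^ k
      = ∏ i ∈ Icc 1 n, (1 + y * exp (-β * i / n)) := by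
  rw [prod_one_add, sum_powerset, Nat.card_Icc, Nat.add_sub_cancel]
  refine sum_congr rfl fun k _ => ?_
  rw [ank, sum_mul]
  refine sum_congr rfl fun t ht => ?_
  rw [prod_mul_distrib, prod_const, (mem_powersetCard.mp ht).2, mul_comm]

lemma sum_mul_exp_le_of_forall_le {c : ℕ → ℝ} (hc : ∀ k, 0 ≤ c k) {y : ℝ} (hy : 0 ≤ y)
    {n K : ℕ} (hK : K ≤ n) (hmax : ∀ k ≤ n, c k * y ^ k ≤ c K * y ^ K) (s : ℝ) :
    (∑ k ∈ range (n + 1), c k * y ^ k) * exp (K * s)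
      ≤ (n + 1) * ∑ k ∈ range (n + 1), c k * (y * exp s) ^ k := by
  have hsum : ∑ k ∈ range (n + 1), c k * y ^ k ≤ (n + 1) * (c K * y ^ K) := by
    calc ∑ k ∈ range (n + 1), c k * y ^ k ≤ ∑ _k ∈ range (n + 1), c K * y ^ K :=
          sum_le_sum fun k hk => hmax k (Nat.lt_succ_iff.mp (mem_range.mp hk))
      _ = (n + 1) * (c K * y ^ K) := by simp
  have hterm : c K * y ^ K * exp (K * s) ≤ ∑ k ∈ range (n + 1), c k * (y * exp s) ^ k := by
    calc c K * y ^ K * exp (K * s) = c K * (y * exp s) ^ K := by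
          rw [mul_pow, ← exp_nat_mul]; ring
      _ ≤ _ := single_le_sum (f := fun k => c k * (y * exp s) ^ k)
          (fun k _ => mul_nonneg (hc k) (by positivity)) (mem_range.mpr (Nat.lt_succ_of_le hK))
  calc (∑ k ∈ range (n + 1), c k * y ^ k) * exp (K * s)
      ≤ (n + 1) * (c K * y ^ K) * exp (K * s) := by gcongr
    _ ≤ (n + 1) * ∑ k ∈ range (n + 1), c k * (y * exp s) ^ k := by
      rw [mul_assoc]; gcongr

noncomputable def bernoulliCGF (p s : ℝ) : ℝ := log (1 - p + p * exp s)

section bernoulliCGF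

variable {p : ℝ} (hp : p ∈ Set.Icc 0 1) (s : ℝ)
include hp

lemma one_sub_add_mul_exp_pos : 0 < 1 - p + p * exp s := by
  rcases hp.1.eq_or_lt with rfl | hp0
  · simp
  · linarith [hp.2, mul_pos hp0 (exp_pos s)]

lemma mul_le_bernoulliCGF : s * p ≤ bernoulliCGF p s := by
  have hjensen : exp (p * s) ≤ (1 - p) + p * exp s := by
    simpa using convexOn_exp.2 (Set.mem_univ 0) (Set.mem_univ s) (by linarith [hp.2]) hp.1
      (by ring)
  rw [bernoulliCGF, ← log_exp (s * p), mul_comm]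
  exact log_le_log (exp_pos _) hjensen

lemma bernoulliCGF_le : bernoulliCGF p s ≤ s * p + s * (exp s - 1) := by
  have hlog : bernoulliCGF p s ≤ p * (exp s - 1) := by
    have := log_le_sub_one_of_pos (one_sub_add_mul_exp_pos hp s)
    rw [bernoulliCGF]; linarith
  -- `e^s - 1 - s ≤ s (e^s - 1)` is `1 - e^{-s} ≤ s` multiplied by `e^s`
  have hexp : exp s - 1 - s ≤ s * (exp s - 1) := by
    nlinarith [add_one_le_exp (-s), exp_pos s, exp_neg s, mul_inv_cancel₀ (exp_pos s).ne']
  nlinarith [add_one_le_exp s, hp.1, hp.2]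

end bernoulliCGF

lemma mul_sum_le_sum_bernoulliCGF {ι : Type*} {t : Finset ι} {p : ι → ℝ}
    (hp : ∀ i ∈ t, p i ∈ Set.Icc 0 1) (s : ℝ) :
    s * ∑ i ∈ t, p i ≤ ∑ i ∈ t, bernoulliCGF (p i) s := by
  rw [mul_sum]
  exact sum_le_sum fun i hi => mul_le_bernoulliCGF (hp i hi) s

lemma sum_bernoulliCGF_le {ι : Type*} {t : Finset ι} {p : ι → ℝ}
    (hp : ∀ i ∈ t, p i ∈ Set.Icc 0 1) (s : ℝ) :
    ∑ i ∈ t, bernoulliCGF (p i) s ≤ s * ∑ i ∈ t, p i + #t * (s * (exp s - 1)) := by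
  calc ∑ i ∈ t, bernoulliCGF (p i) s ≤ ∑ i ∈ t, (s * p i + s * (exp s - 1)) :=
        sum_le_sum fun i hi => bernoulliCGF_le (hp i hi) s
    _ = s * ∑ i ∈ t, p i + #t * (s * (exp s - 1)) := by
        rw [sum_add_distrib, sum_const, nsmul_eq_mul, mul_sum]

noncomputable def siteProb (β r : ℝ) (n i : ℕ) : ℝ :=
  r * exp (-β * i / n) / (1 + r * exp (-β * i / n))

section siteProb

variable {β r : ℝ} (hr : 0 ≤ r) (n : ℕ)
include hr

lemma siteProb_mem_Icc (i : ℕ) : siteProb β r n i ∈ Set.Icc 0 1 := by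
  have hq : 0 ≤ r * exp (-β * i / n) := by positivity
  exact ⟨by unfold siteProb; positivity, div_le_one_of_le₀ (by linarith) (by linarith)⟩

lemma one_sub_siteProb_add_mul_exp (i : ℕ) (s : ℝ) :
    1 - siteProb β r n i + siteProb β r n i * exp s
      = (1 + r * exp s * exp (-β * i / n)) / (1 + r * exp (-β * i / n)) := by
  have hq : 0 < 1 + r * exp (-β * i / n) := by positivity
  rw [siteProb]
  field_simp
  ring

lemma natCast_mul_le_log_add_sum_bernoulliCGF {K : ℕ} (hK : K ≤ n)
    (hmax : ∀ k ≤ n, ank β n k * r ^ k ≤ ank β n K * r ^ K) (s : ℝ) :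
    K * s ≤ log (n + 1) + ∑ i ∈ Icc 1 n, bernoulliCGF (siteProb β r n i) s := by
  have hpos : 0 < ∏ i ∈ Icc 1 n, (1 + r * exp (-β * i / n)) :=
    prod_pos fun i _ => by positivity
  have hfactor : ∏ i ∈ Icc 1 n, (1 + r * exp s * exp (-β * i / n))
      = (∏ i ∈ Icc 1 n, (1 + r * exp (-β * i / n)))
        * ∏ i ∈ Icc 1 n, (1 - siteProb β r n i + siteProb β r n i * exp s) := by
    rw [← prod_mul_distrib]
    refine prod_congr rfl fun i _ => ?_
    rw [one_sub_siteProb_add_mul_exp hr, mul_div_cancel₀ _ (by positivity)]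
  have h := sum_mul_exp_le_of_forall_le (ank_nonneg β n) hr hK hmax s
  rw [sum_ank_mul_pow, sum_ank_mul_pow, hfactor] at h
  have hexp : exp (K * s) ≤ (n + 1) * ∏ i ∈ Icc 1 n,
      (1 - siteProb β r n i + siteProb β r n i * exp s) :=
    le_of_mul_le_mul_left (by linarith) hpos
  have hlog := log_le_log (exp_pos _) hexp
  rwa [log_exp, log_mul (by positivity) (prod_pos fun i _ =>
      one_sub_add_mul_exp_pos (siteProb_mem_Icc hr n i) s).ne',
    log_prod fun i _ => (one_sub_add_mul_exp_pos (siteProb_mem_Icc hr n i) s).ne'] at hlog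

lemma sum_bernoulliCGF_siteProb_div (hn : n ≠ 0) :
    ∑ i ∈ Icc 1 n, bernoulliCGF (siteProb β r n i) (β / n)
      = log (1 + r) - log (1 + r * exp (-β)) := by
  set f : ℕ → ℝ := fun j => log (1 + r * exp (-β * j / n))
  have hterm (j : ℕ) : bernoulliCGF (siteProb β r n (1 + j)) (β / n) = f j - f (j + 1) := by
    rw [bernoulliCGF, one_sub_siteProb_add_mul_exp hr, log_div (by positivity) (by positivity),
      mul_assoc, ← exp_add]
    congr 4
    · congr 1; push_cast; ring
    · rw [add_comm 1 j]
  rw [← Ico_add_one_right_eq_Icc, sum_Ico_eq_sum_range, Nat.add_sub_cancel]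
  simp only [hterm]
  rw [sum_range_sub']
  simp only [f, Nat.cast_zero, mul_zero, zero_div, exp_zero, mul_one]
  rw [mul_div_assoc, div_self (Nat.cast_ne_zero.2 hn), mul_one]

end siteProb

noncomputable def meanDensity (β r : ℝ) (n : ℕ) : ℝ :=
  (∑ i ∈ Icc 1 n, siteProb β r n i) / n

section meanDensity

variable {β r : ℝ} (hβ : 0 < β) (hr : 0 ≤ r)
include hβ hr

lemma meanDensity_mem_Icc {n : ℕ} (hn : n ≠ 0) :
    meanDensity β r n ∈ Set.Icc
      ((1 / β) * log ((1 + r) / (1 + r * exp (-β))) - (exp (β / n) - 1))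
      ((1 / β) * log ((1 + r) / (1 + r * exp (-β)))) := by
  set L := (1 / β) * log ((1 + r) / (1 + r * exp (-β)))
  have hL : β * L = ∑ i ∈ Icc 1 n, bernoulliCGF (siteProb β r n i) (β / n) := by
    rw [sum_bernoulliCGF_siteProb_div hr n hn, ← log_div (by positivity) (by positivity)]
    simp only [L]; field_simp
  have hp (i : ℕ) (_ : i ∈ Icc 1 n) := siteProb_mem_Icc (β := β) hr n i
  have hlow := mul_sum_le_sum_bernoulliCGF hp (β / n)
  have hup := sum_bernoulliCGF_le hp (β / n)
  have hS : β / n * ∑ i ∈ Icc 1 n, siteProb β r n i = β * meanDensity β r n := by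
    rw [meanDensity]; ring
  have hcard : (#(Icc 1 n) : ℝ) * (β / n * (exp (β / n) - 1)) = β * (exp (β / n) - 1) := by
    rw [Nat.card_Icc, Nat.add_sub_cancel]; field_simp
  rw [← hL, hS] at hlow hup
  rw [hcard] at hup
  exact ⟨le_of_mul_le_mul_left (by linarith) hβ, le_of_mul_le_mul_left hlow hβ⟩

lemma tendsto_meanDensity :
    Tendsto (meanDensity β r) atTop
      (𝓝 ((1 / β) * log ((1 + r) / (1 + r * exp (-β))))) := by
  have hexp : Tendsto (fun n : ℕ => exp (β / n) - 1) atTop (𝓝 0) := by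
    simpa using ((continuous_exp.tendsto 0).comp
      (tendsto_const_div_atTop_nhds_zero_nat β)).sub_const 1
  refine tendsto_of_tendsto_of_tendsto_of_le_of_le'
    (by simpa only [sub_zero] using tendsto_const_nhds.sub hexp) tendsto_const_nhds ?_ ?_ <;>
  filter_upwards [eventually_ne_atTop 0] with n hn
  exacts [(meanDensity_mem_Icc hβ hr hn).1, (meanDensity_mem_Icc hβ hr hn).2]

end meanDensity

lemma tendsto_log_add_one_div_atTop : Tendsto (fun n : ℕ => log (n + 1) / n) atTop (𝓝 0) := by
  have h := (tendsto_pow_log_div_mul_add_atTop 1 (-1) 1 one_ne_zero).comp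
    (tendsto_atTop_add_const_right _ 1 tendsto_natCast_atTop_atTop)
  simpa [Function.comp_def] using h

lemma tendsto_of_forall_mul_le {ι : Type*} {l : Filter ι} {x m ε : ι → ℝ} {L : ℝ}
    (hm : Tendsto m l (𝓝 L)) (hε : Tendsto ε l (𝓝 0))
    (h : ∀ s, ∀ᶠ i in l, x i * s ≤ ε i + s * m i + s * (exp s - 1)) :
    Tendsto x l (𝓝 L) := by
  refine tendsto_order.2 ⟨fun a ha => ?_, fun b hb => ?_⟩
  · set s := (a - L) / 2
    have hs : s < 0 := by simp only [s]; linarith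
    have hlim : Tendsto (fun i => ε i / s + m i + s) l (𝓝 (L + s)) := by
      simpa using ((hε.div_const s).add hm).add_const s
    filter_upwards [h s, hlim.eventually_const_lt (show a < L + s by simp only [s]; linarith)]
      with i hi hlt
    have : ε i / s + m i + (exp s - 1) ≤ x i := by
      rw [div_add' _ _ _ hs.ne, div_add' _ _ _ hs.ne, div_le_iff_of_neg hs]
      linarith
    linarith [add_one_le_exp s]
  · set s := log (1 + (b - L) / 2)
    have hs : 0 < s := log_pos (by linarith)
    have hexp : exp s - 1 = (b - L) / 2 := by rw [exp_log (by linarith)]; ring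
    have hlim : Tendsto (fun i => ε i / s + m i + (exp s - 1)) l (𝓝 (L + (exp s - 1))) := by
      simpa using ((hε.div_const s).add hm).add_const (exp s - 1)
    filter_upwards [h s, hlim.eventually_lt_const (show L + (exp s - 1) < b by linarith)]
      with i hi hlt
    have : x i ≤ ε i / s + m i + (exp s - 1) := by
      rw [div_add' _ _ _ hs.ne', div_add' _ _ _ hs.ne', le_div_iff₀ hs]
      linarith
    linarith

lemma div_mul_le_log_div_add_mul_meanDensity {β r : ℝ} (hr : 0 ≤ r) {n K : ℕ} (hn : n ≠ 0)
    (hK : K ≤ n) (hmax : ∀ k ≤ n, ank β n k * r ^ k ≤ ank β n K * r ^ K) (s : ℝ) :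
    (K / n : ℝ) * s ≤ log (n + 1) / n + s * meanDensity β r n + s * (exp s - 1) := by
  have hn' : (0 : ℝ) < n := by positivity
  have hmode := natCast_mul_le_log_add_sum_bernoulliCGF hr n hK hmax s
  have hcgf :=
    sum_bernoulliCGF_le (t := Icc 1 n) (fun i _ => siteProb_mem_Icc (β := β) hr n i) s
  rw [Nat.card_Icc, Nat.add_sub_cancel] at hcgf
  rw [meanDensity, div_mul_eq_mul_div, div_le_iff₀ hn']
  have : (log (n + 1) / n + s * ((∑ i ∈ Icc 1 n, siteProb β r n i) / n) + s * (exp s - 1)) * n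
      = log (n + 1) + s * ∑ i ∈ Icc 1 n, siteProb β r n i + n * (s * (exp s - 1)) := by
    field_simp
  linarith

theorem mode_limit (β : ℝ) (hβ : 0 < β) (r : ℝ) (hr : 0 < r) (κ : ℕ → ℕ)
    (hκ : ∀ n : ℕ, 1 ≤ n → κ n ≤ n ∧
      ∀ k ≤ n, ank β n k * r ^ k ≤ ank β n (κ n) * r ^ (κ n)) :
    Filter.Tendsto (fun n : ℕ => (κ n : ℝ) / n) Filter.atTop
      (nhds ((1 / β) * Real.log ((1 + r) / (1 + r * Real.exp (-β))))) := by
  refine tendsto_of_forall_mul_le (tendsto_meanDensity hβ hr.le) tendsto_log_add_one_div_atTop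
    fun s => ?_
  filter_upwards [eventually_ge_atTop 1] with n hn
  obtain ⟨hκn, hmax⟩ := hκ n hn
  exact div_mul_le_log_div_add_mul_meanDensity hr.le (by omega) hκn hmax s
end
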